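/- arXiv:2406.17166 — 10 statements merged into one kernel-verified Lean document; each statement's English description precedes it below -/
import Mathlib

section
/- There exists a constant C > 0 depending only on the graph G with the following property. Let K > 0, h₊, h₋ : V → ℝ and c ∈ ℝ satisfy: (H1) K^{−1} ≤ max_{x∈V} |h₊(x)| ≤ K, K^{−1} ≤ max_{x∈V} |h₋(x)| ≤ K and |c| ≤ K; (H2) h₊(x)² ≥ K^{−1} h₊(x) and h₋(x)² ≥ −K^{−1} h₋(x) for all x ∈ V. Then every solution u : V → ℝ of the sinh-Gordon equation −Δu = h₊e^{u} + h₋e^{−u} − c satisfies max_{x∈V} |u(x)| ≤ C·K. -/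
open Finset Real Filter

/-- The (μ-)Laplacian of `u` at vertex `x` on a finite weighted graph. -/
noncomputable def graphLap {V : Type*} [Fintype V] (ω : V → V → ℝ) (μ : V → ℝ)
    (u : V → ℝ) (x : V) : ℝ :=
  (1 / μ x) * ∑ y, ω x y * (u y - u x)

/-- Connectedness: any two vertices are joined by a path of adjacent vertices. -/
def graphConnected {V : Type*} [Fintype V] (ω : V → V → ℝ) : Prop :=
  ∀ x y : V, ∃ (n : ℕ) (p : ℕ → V), p 0 = x ∧ p n = y ∧ ∀ i < n, 0 < ω (p i) (p (i + 1))

/-- Maximum of a real function on a finite nonempty vertex set. -/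
noncomputable def maxV {V : Type*} [Fintype V] [Nonempty V] (f : V → ℝ) : ℝ :=
  Finset.univ.sup' Finset.univ_nonempty f

/-- Minimum of a real function on a finite nonempty vertex set. -/
noncomputable def minV {V : Type*} [Fintype V] [Nonempty V] (f : V → ℝ) : ℝ :=
  Finset.univ.inf' Finset.univ_nonempty f

section aux
variable {V : Type*} [Fintype V]

lemma sum_mu_lap (ω : V → V → ℝ) (μ : V → ℝ)
    (hsymm : ∀ x y, ω x y = ω y x) (hμ : ∀ x, 0 < μ x) (u : V → ℝ) :
    ∑ x, μ x * graphLap ω μ u x = 0 := by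
  have h : ∀ x, μ x * graphLap ω μ u x = ∑ y, ω x y * (u y - u x) := by
    intro x
    have hne : μ x ≠ 0 := (hμ x).ne'
    rw [graphLap]
    field_simp
  rw [Finset.sum_congr rfl fun x _ => h x]
  have h2 : (∑ x : V, ∑ y : V, ω x y * (u y - u x))
      = -(∑ x : V, ∑ y : V, ω x y * (u y - u x)) := by
    calc (∑ x : V, ∑ y : V, ω x y * (u y - u x))
        = ∑ y : V, ∑ x : V, ω x y * (u y - u x) := Finset.sum_comm
      _ = ∑ a : V, ∑ b : V, ω b a * (u a - u b) := rfl
      _ = ∑ a : V, ∑ b : V, -(ω a b * (u b - u a)) := by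
          refine Finset.sum_congr rfl fun a _ => Finset.sum_congr rfl fun b _ => ?_
          rw [hsymm a b]; ring
      _ = -(∑ a : V, ∑ b : V, ω a b * (u b - u a)) := by
          simp [Finset.sum_neg_distrib]
  linarith [h2]

lemma energy_eq (ω : V → V → ℝ) (μ : V → ℝ)
    (hsymm : ∀ x y, ω x y = ω y x) (hμ : ∀ x, 0 < μ x) (u : V → ℝ) :
    ∑ x, ∑ y, ω x y * (u x - u y)^2
      = 2 * ∑ x, μ x * (u x * (-graphLap ω μ u x)) := by
  have h : ∀ x : V, μ x * (u x * (-graphLap ω μ u x)) = ∑ y, ω x y * (u x * (u x - u y)) := by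
    intro x
    have hne : μ x ≠ 0 := (hμ x).ne'
    rw [graphLap]
    have h1 : ∑ y, ω x y * (u x * (u x - u y)) = (-u x) * ∑ y, ω x y * (u y - u x) := by
      rw [Finset.mul_sum]
      exact Finset.sum_congr rfl fun y _ => by ring
    rw [h1]
    field_simp
  have h2 : ∑ x, μ x * (u x * (-graphLap ω μ u x))
      = ∑ x : V, ∑ y : V, ω x y * (u x * (u x - u y)) :=
    Finset.sum_congr rfl fun x _ => h x
  rw [h2]
  have h3 : (∑ x : V, ∑ y : V, ω x y * (u y * (u y - u x)))
      = ∑ x : V, ∑ y : V, ω x y * (u x * (u x - u y)) := by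
    calc (∑ x : V, ∑ y : V, ω x y * (u y * (u y - u x)))
        = ∑ y : V, ∑ x : V, ω x y * (u y * (u y - u x)) := Finset.sum_comm
      _ = ∑ a : V, ∑ b : V, ω b a * (u a * (u a - u b)) := rfl
      _ = ∑ a : V, ∑ b : V, ω a b * (u a * (u a - u b)) := by
          refine Finset.sum_congr rfl fun a _ => Finset.sum_congr rfl fun b _ => ?_
          rw [hsymm a b]
  calc ∑ x : V, ∑ y : V, ω x y * (u x - u y)^2
      = ∑ x : V, ∑ y : V, (ω x y * (u x * (u x - u y)) + ω x y * (u y * (u y - u x))) := by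
        refine Finset.sum_congr rfl fun x _ => Finset.sum_congr rfl fun y _ => ?_
        ring
    _ = (∑ x : V, ∑ y : V, ω x y * (u x * (u x - u y)))
        + (∑ x : V, ∑ y : V, ω x y * (u y * (u y - u x))) := by
        rw [← Finset.sum_add_distrib]
        exact Finset.sum_congr rfl fun x _ => Finset.sum_add_distrib
    _ = 2 * ∑ x : V, ∑ y : V, ω x y * (u x * (u x - u y)) := by rw [h3]; ring

end aux

set_option maxHeartbeats 2000000 in
/-- Uniform a priori estimate with constants depending only on the graph. -/
theorem stmt_1 {V : Type*} [Fintype V] [Nonempty V]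
    (ω : V → V → ℝ) (μ : V → ℝ)
    (hsymm : ∀ x y, ω x y = ω y x)
    (hnonneg : ∀ x y, 0 ≤ ω x y)
    (hconn : graphConnected ω)
    (hμ : ∀ x, 0 < μ x) :
    ∃ C > (0 : ℝ), ∀ (K : ℝ), 0 < K → ∀ (hp hm : V → ℝ) (c : ℝ),
      K⁻¹ ≤ maxV (fun x => |hp x|) → maxV (fun x => |hp x|) ≤ K →
      K⁻¹ ≤ maxV (fun x => |hm x|) → maxV (fun x => |hm x|) ≤ K →
      |c| ≤ K →
      (∀ x, K⁻¹ * hp x ≤ (hp x) ^ 2) →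
      (∀ x, -(K⁻¹ * hm x) ≤ (hm x) ^ 2) →
      ∀ u : V → ℝ,
        (∀ x, -graphLap ω μ u x = hp x * Real.exp (u x) + hm x * Real.exp (-u x) - c) →
        maxV (fun x => |u x|) ≤ C * K := by
  classical
  -- graph constants (made opaque)
  obtain ⟨S, hS_def⟩ : ∃ S : ℝ, S = ∑ x, μ x := ⟨_, rfl⟩
  have hS : 0 < S := by
    rw [hS_def]; exact Finset.sum_pos (fun x _ => hμ x) Finset.univ_nonempty
  obtain ⟨μ₀, hμ₀_def⟩ : ∃ μ₀ : ℝ, μ₀ = minV μ := ⟨_, rfl⟩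
  have hμ₀ : 0 < μ₀ := by
    obtain ⟨x, -, hx⟩ := Finset.exists_mem_eq_inf' (Finset.univ_nonempty (α := V)) μ
    rw [hμ₀_def, minV, hx]; exact hμ x
  have hμ₀le : ∀ x, μ₀ ≤ μ x := by
    intro x; rw [hμ₀_def]; exact Finset.inf'_le _ (mem_univ x)
  obtain ⟨A, hA_def⟩ : ∃ A : ℝ, A = maxV (fun x => (∑ y, ω x y) / μ x) := ⟨_, rfl⟩
  have hA0 : 0 ≤ A := by
    have x := Classical.arbitrary V
    rw [hA_def]
    refine le_trans ?_ (Finset.le_sup' (f := fun x => (∑ y, ω x y) / μ x) (mem_univ x))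
    exact div_nonneg (Finset.sum_nonneg fun y _ => hnonneg x y) (hμ x).le
  have hAle : ∀ x, (∑ y, ω x y) / μ x ≤ A := by
    intro x; rw [hA_def]
    exact Finset.le_sup' (f := fun x => (∑ y, ω x y) / μ x) (mem_univ x)
  obtain ⟨C₅, hC₅_def⟩ : ∃ C₅ : ℝ, C₅ = 1 + Real.sqrt (S / μ₀) * (A + 2) := ⟨_, rfl⟩
  have hsqrtSμ : 0 ≤ Real.sqrt (S / μ₀) := Real.sqrt_nonneg _
  have hC₅1 : 1 ≤ C₅ := by rw [hC₅_def]; nlinarith only [hsqrtSμ, hA0]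
  have hC₅0 : 0 < C₅ := by linarith only [hC₅1]
  -- path constants
  have key : ∀ a b : V, ∃ κ : ℝ, 0 < κ ∧ ∀ u : V → ℝ,
      |u a - u b| ≤ κ * Real.sqrt (∑ x, ∑ y, ω x y * (u x - u y)^2) := by
    intro a b
    obtain ⟨n, pth, hp0, hpn, hpe⟩ := hconn a b
    refine ⟨1 + ∑ i ∈ Finset.range n, (Real.sqrt (ω (pth i) (pth (i+1))))⁻¹, ?_, ?_⟩
    · have : 0 ≤ ∑ i ∈ Finset.range n, (Real.sqrt (ω (pth i) (pth (i+1))))⁻¹ :=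
        Finset.sum_nonneg fun i _ => by positivity
      linarith
    intro u
    have hE0 : 0 ≤ ∑ x, ∑ y, ω x y * (u x - u y)^2 :=
      Finset.sum_nonneg fun x _ => Finset.sum_nonneg fun y _ =>
        mul_nonneg (hnonneg x y) (sq_nonneg _)
    have hsingle : ∀ cc d : V, ω cc d * (u cc - u d)^2 ≤ ∑ x, ∑ y, ω x y * (u x - u y)^2 := by
      intro cc d
      refine le_trans (Finset.single_le_sum (f := fun y => ω cc y * (u cc - u y)^2)
        (fun y _ => mul_nonneg (hnonneg cc y) (sq_nonneg _)) (mem_univ d)) ?_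
      exact Finset.single_le_sum (f := fun x => ∑ y, ω x y * (u x - u y)^2)
        (fun x _ => Finset.sum_nonneg fun y _ => mul_nonneg (hnonneg x y) (sq_nonneg _))
        (mem_univ cc)
    have hstep : ∀ i < n, |u (pth i) - u (pth (i+1))|
        ≤ (Real.sqrt (ω (pth i) (pth (i+1))))⁻¹ * Real.sqrt (∑ x, ∑ y, ω x y * (u x - u y)^2) := by
      intro i hi
      have hω := hpe i hi
      have h1 : (u (pth i) - u (pth (i+1)))^2
          ≤ (∑ x, ∑ y, ω x y * (u x - u y)^2) / ω (pth i) (pth (i+1)) := by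
        rw [le_div_iff₀ hω]
        have h9 := hsingle (pth i) (pth (i+1))
        nlinarith only [h9]
      calc |u (pth i) - u (pth (i+1))| = Real.sqrt ((u (pth i) - u (pth (i+1)))^2) :=
            (Real.sqrt_sq_eq_abs _).symm
        _ ≤ Real.sqrt ((∑ x, ∑ y, ω x y * (u x - u y)^2) / ω (pth i) (pth (i+1))) :=
            Real.sqrt_le_sqrt h1
        _ = (Real.sqrt (ω (pth i) (pth (i+1))))⁻¹
              * Real.sqrt (∑ x, ∑ y, ω x y * (u x - u y)^2) := by
            rw [Real.sqrt_div hE0, div_eq_mul_inv, mul_comm]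
    have htel : u a - u b = ∑ i ∈ Finset.range n, (u (pth i) - u (pth (i+1))) := by
      rw [Finset.sum_range_sub' (fun i => u (pth i)) n, hp0, hpn]
    calc |u a - u b| = |∑ i ∈ Finset.range n, (u (pth i) - u (pth (i+1)))| := by rw [htel]
      _ ≤ ∑ i ∈ Finset.range n, |u (pth i) - u (pth (i+1))| := Finset.abs_sum_le_sum_abs _ _
      _ ≤ ∑ i ∈ Finset.range n, (Real.sqrt (ω (pth i) (pth (i+1))))⁻¹
            * Real.sqrt (∑ x, ∑ y, ω x y * (u x - u y)^2) :=
          Finset.sum_le_sum fun i hi => hstep i (Finset.mem_range.mp hi)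
      _ = (∑ i ∈ Finset.range n, (Real.sqrt (ω (pth i) (pth (i+1))))⁻¹)
            * Real.sqrt (∑ x, ∑ y, ω x y * (u x - u y)^2) := by
          rw [Finset.sum_mul]
      _ ≤ (1 + ∑ i ∈ Finset.range n, (Real.sqrt (ω (pth i) (pth (i+1))))⁻¹)
            * Real.sqrt (∑ x, ∑ y, ω x y * (u x - u y)^2) := by
          have h1 : (0:ℝ) ≤ Real.sqrt (∑ x, ∑ y, ω x y * (u x - u y)^2) := Real.sqrt_nonneg _
          nlinarith only [h1]
  choose κ hκpos hκ using key
  obtain ⟨κs, hκs_def⟩ : ∃ κs : ℝ, κs = maxV (fun a => maxV (fun b => κ a b)) := ⟨_, rfl⟩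
  have hκs_le : ∀ a b, κ a b ≤ κs := by
    intro a b; rw [hκs_def]
    exact le_trans (Finset.le_sup' (f := fun b => κ a b) (mem_univ b))
      (Finset.le_sup' (f := fun a => maxV (fun b => κ a b)) (mem_univ a))
  have hκs_pos : 0 < κs := by
    have a := Classical.arbitrary V
    exact lt_of_lt_of_le (hκpos a a) (hκs_le a a)
  obtain ⟨Q, hQ_def⟩ : ∃ Q : ℝ, Q = κs^2 := ⟨_, rfl⟩
  have hQpos : 0 < Q := by rw [hQ_def]; exact pow_pos hκs_pos 2
  obtain ⟨R, hR_def⟩ : ∃ R : ℝ, R = 2*Q*S*(2*C₅+3) := ⟨_, rfl⟩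
  have hR : 0 < R := by
    rw [hR_def]
    have h1 : (0:ℝ) < 2*Q*S := by positivity
    have h2 : (0:ℝ) < 2*C₅+3 := by linarith
    exact mul_pos h1 h2
  obtain ⟨R', hR'_def⟩ : ∃ R' : ℝ, R' = 2*R+1 := ⟨_, rfl⟩
  have hR'1 : 1 ≤ R' := by rw [hR'_def]; linarith only [hR]
  obtain ⟨G, hG_def⟩ : ∃ G : ℝ, G = C₅ + 4 := ⟨_, rfl⟩
  have hG : 5 ≤ G := by rw [hG_def]; linarith only [hC₅1]
  obtain ⟨Γ, hΓ_def⟩ : ∃ Γ : ℝ, Γ = 2*R'*(G+1) + 4*R'^2 := ⟨_, rfl⟩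
  have hΓ0 : 0 < Γ := by rw [hΓ_def]; nlinarith only [hR'1, hG]
  refine ⟨G + 1 + 2*Γ, by linarith only [hG, hΓ0], ?_⟩
  intro K hK hp hm c hp1 hp2 hm1 hm2 hc hH2p hH2m u heq
  have hKinv : 0 < K⁻¹ := inv_pos.mpr hK
  have hK0 : (0:ℝ) ≤ K := hK.le
  have hKK : K * K⁻¹ = 1 := mul_inv_cancel₀ hK.ne'
  have hK1 : 1 ≤ K := by
    by_contra h
    push_neg at h
    have h9 : K⁻¹ ≤ K := le_trans hp1 hp2
    have h10 : K⁻¹ < 1 := lt_of_le_of_lt h9 h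
    have h11 := mul_lt_mul_of_pos_left h10 hK
    rw [hKK, mul_one] at h11
    linarith only [h, h11]
  have hpK : ∀ x, |hp x| ≤ K := fun x =>
    le_trans (Finset.le_sup' (f := fun x => |hp x|) (mem_univ x)) hp2
  have hmK : ∀ x, |hm x| ≤ K := fun x =>
    le_trans (Finset.le_sup' (f := fun x => |hm x|) (mem_univ x)) hm2
  -- dichotomies
  have hdichp : ∀ x, hp x ≤ 0 ∨ K⁻¹ ≤ hp x := by
    intro x
    rcases le_or_gt (hp x) 0 with h | h
    · exact Or.inl h
    · right; nlinarith only [hH2p x, h]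
  have hdichm : ∀ x, 0 ≤ hm x ∨ hm x ≤ -K⁻¹ := by
    intro x
    rcases le_or_gt 0 (hm x) with h | h
    · exact Or.inl h
    · right; nlinarith only [hH2m x, h]
  obtain ⟨M, hM_def⟩ : ∃ M : ℝ, M = maxV u := ⟨_, rfl⟩
  obtain ⟨m, hm_def⟩ : ∃ m : ℝ, m = minV u := ⟨_, rfl⟩
  have hub : ∀ x, u x ≤ M := by
    intro x; rw [hM_def]; exact Finset.le_sup' u (mem_univ x)
  have hlb : ∀ x, m ≤ u x := by
    intro x; rw [hm_def]; exact Finset.inf'_le u (mem_univ x)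
  obtain ⟨O, hO_def⟩ : ∃ O : ℝ, O = M - m := ⟨_, rfl⟩
  have hO : 0 ≤ O := by
    have a := Classical.arbitrary V
    have h1 := hub a; have h2 := hlb a
    rw [hO_def]; linarith only [h1, h2]
  have hOK : (0:ℝ) < O + K := by linarith only [hO, hK]
  -- pointwise laplacian bound
  have hdiff : ∀ x y : V, |u y - u x| ≤ O := by
    intro x y
    rw [abs_sub_le_iff]
    constructor
    · rw [hO_def]; linarith only [hub y, hlb x]
    · rw [hO_def]; linarith only [hub x, hlb y]
  have hlap : ∀ x, |graphLap ω μ u x| ≤ A * O := by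
    intro x
    rw [graphLap]
    have h1 : |∑ y, ω x y * (u y - u x)| ≤ (∑ y, ω x y) * O := by
      refine le_trans (Finset.abs_sum_le_sum_abs _ _) ?_
      rw [Finset.sum_mul]
      refine Finset.sum_le_sum fun y _ => ?_
      rw [abs_mul, abs_of_nonneg (hnonneg x y)]
      exact mul_le_mul_of_nonneg_left (hdiff x y) (hnonneg x y)
    rw [abs_mul, abs_of_pos (show (0:ℝ) < 1 / μ x from one_div_pos.mpr (hμ x))]
    calc (1/μ x) * |∑ y, ω x y * (u y - u x)| ≤ (1/μ x) * ((∑ y, ω x y) * O) :=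
          mul_le_mul_of_nonneg_left h1 (one_div_pos.mpr (hμ x)).le
      _ = ((∑ y, ω x y)/μ x) * O := by ring
      _ ≤ A * O := mul_le_mul_of_nonneg_right (hAle x) hO
  obtain ⟨p, hp_def⟩ : ∃ p : V → ℝ, p = fun x => hp x * Real.exp (u x) := ⟨_, rfl⟩
  obtain ⟨q, hq_def⟩ : ∃ q : V → ℝ, q = fun x => hm x * Real.exp (-u x) := ⟨_, rfl⟩
  have heq' : ∀ x, p x + q x - c = -graphLap ω μ u x := by
    intro x
    simp only [hp_def, hq_def]
    linarith only [heq x]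
  have hsum0 : ∑ x, μ x * (p x + q x - c) = 0 := by
    have h := sum_mu_lap ω μ hsymm hμ u
    calc ∑ x, μ x * (p x + q x - c) = ∑ x, μ x * (-graphLap ω μ u x) :=
          Finset.sum_congr rfl fun x _ => by rw [heq' x]
      _ = -∑ x, μ x * graphLap ω μ u x := by
          rw [← Finset.sum_neg_distrib]
          exact Finset.sum_congr rfl fun x _ => by ring
      _ = 0 := by rw [h]; ring
  have hsumpq : ∑ x, μ x * (p x + q x) = c * S := by
    have h1 : ∑ x, μ x * (p x + q x) - c * S = ∑ x, μ x * (p x + q x - c) := by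
      rw [hS_def, Finset.mul_sum, ← Finset.sum_sub_distrib]
      exact Finset.sum_congr rfl fun x _ => by ring
    linarith only [hsum0, h1]
  -- energy
  have hE0 : 0 ≤ ∑ x, ∑ y, ω x y * (u x - u y)^2 :=
    Finset.sum_nonneg fun x _ => Finset.sum_nonneg fun y _ =>
      mul_nonneg (hnonneg x y) (sq_nonneg _)
  have hEeq : ∑ x, ∑ y, ω x y * (u x - u y)^2
      = 2 * ∑ x, μ x * (u x * (p x + q x - c)) := by
    rw [energy_eq ω μ hsymm hμ u]
    congr 1
    exact Finset.sum_congr rfl fun x _ => by rw [heq' x]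
  have hlapsq : ∑ x, μ x * (graphLap ω μ u x)^2 ≤ (A*O)^2 * S := by
    calc ∑ x, μ x * (graphLap ω μ u x)^2 ≤ ∑ x, μ x * (A*O)^2 := by
          refine Finset.sum_le_sum fun x _ => ?_
          refine mul_le_mul_of_nonneg_left ?_ (hμ x).le
          have h1 := pow_le_pow_left₀ (abs_nonneg (graphLap ω μ u x)) (hlap x) 2
          rwa [sq_abs] at h1
      _ = (A*O)^2 * S := by
          rw [hS_def, Finset.mul_sum]
          exact Finset.sum_congr rfl fun x _ => mul_comm _ _
  have hpqmul : ∀ x, p x * q x = hp x * hm x := by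
    intro x
    simp only [hp_def, hq_def]
    rw [show hp x * Real.exp (u x) * (hm x * Real.exp (-u x))
        = hp x * hm x * (Real.exp (u x) * Real.exp (-u x)) from by ring, ← Real.exp_add]
    simp
  have hpq2 : ∑ x, μ x * ((p x)^2 + (q x)^2) ≤ ((A*O)^2 + 3*K^2) * S := by
    have e2 : ∑ x, μ x * ((p x)^2 + (q x)^2)
        = (∑ x, μ x * (p x + q x - c)^2) - 2*(∑ x, μ x * (hp x * hm x))
          - c^2 * S + 2*c*(∑ x, μ x * (p x + q x)) := by
      have hterm : ∀ x : V, μ x * ((p x)^2 + (q x)^2)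
          = μ x * (p x + q x - c)^2 - 2*(μ x * (hp x * hm x)) - c^2 * μ x
            + 2*c*(μ x * (p x + q x)) := fun x => by
        linear_combination (-2*μ x) * hpqmul x
      rw [Finset.sum_congr rfl fun x _ => hterm x, hS_def]
      rw [Finset.sum_add_distrib, Finset.sum_sub_distrib, Finset.sum_sub_distrib,
        ← Finset.mul_sum, ← Finset.mul_sum, ← Finset.mul_sum]
    have e3 : ∑ x, μ x * (p x + q x - c)^2 = ∑ x, μ x * (graphLap ω μ u x)^2 := by
      refine Finset.sum_congr rfl fun x _ => ?_
      rw [heq' x]; ring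
    have e4 : -(2*(∑ x, μ x * (hp x * hm x))) ≤ 2*K^2*S := by
      have h5 : ∀ x : V, -(μ x * (hp x * hm x)) ≤ μ x * K^2 := by
        intro x
        have h1 : |hp x * hm x| ≤ K*K := by
          rw [abs_mul]
          exact mul_le_mul (hpK x) (hmK x) (abs_nonneg _) hK0
        have h2 : -(hp x * hm x) ≤ K^2 := by obtain ⟨ha, hb⟩ := abs_le.mp h1; nlinarith only [ha, hb]
        calc -(μ x * (hp x * hm x)) = μ x * (-(hp x * hm x)) := by ring
          _ ≤ μ x * K^2 := mul_le_mul_of_nonneg_left h2 (hμ x).le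
      have h3 : ∑ x, -(μ x * (hp x * hm x)) ≤ ∑ x, μ x * K^2 :=
        Finset.sum_le_sum fun x _ => h5 x
      rw [Finset.sum_neg_distrib] at h3
      have h4 : ∑ x, μ x * K^2 = K^2 * S := by
        rw [hS_def, Finset.mul_sum]
        exact Finset.sum_congr rfl fun x _ => mul_comm _ _
      linarith only [h3, h4]
    have e5 : c^2 ≤ K^2 := by obtain ⟨ha, hb⟩ := abs_le.mp hc; nlinarith only [ha, hb]
    rw [e2, e3, hsumpq]
    nlinarith only [hlapsq, e4, mul_le_mul_of_nonneg_right e5 hS.le]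
  -- pointwise bound on p, q
  have hbdp : ∀ x, |p x| ≤ C₅ * (O + K) := by
    intro x
    have h2 : μ x * ((p x)^2 + (q x)^2) ≤ ∑ z, μ z * ((p z)^2 + (q z)^2) :=
      Finset.single_le_sum (f := fun z => μ z * ((p z)^2 + (q z)^2))
        (fun z _ => mul_nonneg (hμ z).le (by positivity)) (mem_univ x)
    have h3 : μ₀ * (p x)^2 ≤ μ x * ((p x)^2 + (q x)^2) := by
      nlinarith only [hμ₀le x, sq_nonneg (p x), sq_nonneg (q x), (hμ x).le, hμ₀.le]
    have h1 : μ₀ * (p x)^2 ≤ ((A*O)^2 + 3*K^2) * S := by linarith [hpq2]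
    have h4 : (p x)^2 ≤ (S/μ₀) * (A*O + 2*K)^2 := by
      rw [div_mul_eq_mul_div, le_div_iff₀ hμ₀]
      nlinarith only [h1, hS.le, mul_nonneg (mul_nonneg hA0 hO) hK0, sq_nonneg K]
    have h6 : 0 ≤ A*O + 2*K := by
      have := mul_nonneg hA0 hO; linarith
    have h5 : |p x| ≤ Real.sqrt (S/μ₀) * (A*O + 2*K) := by
      calc |p x| = Real.sqrt ((p x)^2) := (Real.sqrt_sq_eq_abs _).symm
        _ ≤ Real.sqrt ((S/μ₀) * (A*O + 2*K)^2) := Real.sqrt_le_sqrt h4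
        _ = Real.sqrt (S/μ₀) * (A*O + 2*K) := by
            rw [Real.sqrt_mul (div_nonneg hS.le hμ₀.le), Real.sqrt_sq h6]
    calc |p x| ≤ Real.sqrt (S/μ₀) * (A*O + 2*K) := h5
      _ ≤ C₅ * (O + K) := by
          rw [hC₅_def]
          nlinarith only [hsqrtSμ, hA0, hO, hK0, mul_nonneg hsqrtSμ (mul_nonneg hA0 hK0),
            mul_nonneg hsqrtSμ hO, hOK]
  have hbdq : ∀ x, |q x| ≤ C₅ * (O + K) := by
    intro x
    have h2 : μ x * ((p x)^2 + (q x)^2) ≤ ∑ z, μ z * ((p z)^2 + (q z)^2) :=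
      Finset.single_le_sum (f := fun z => μ z * ((p z)^2 + (q z)^2))
        (fun z _ => mul_nonneg (hμ z).le (by positivity)) (mem_univ x)
    have h3 : μ₀ * (q x)^2 ≤ μ x * ((p x)^2 + (q x)^2) := by
      nlinarith only [hμ₀le x, sq_nonneg (p x), sq_nonneg (q x), (hμ x).le, hμ₀.le]
    have h1 : μ₀ * (q x)^2 ≤ ((A*O)^2 + 3*K^2) * S := by linarith [hpq2]
    have h4 : (q x)^2 ≤ (S/μ₀) * (A*O + 2*K)^2 := by
      rw [div_mul_eq_mul_div, le_div_iff₀ hμ₀]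
      nlinarith only [h1, hS.le, mul_nonneg (mul_nonneg hA0 hO) hK0, sq_nonneg K]
    have h6 : 0 ≤ A*O + 2*K := by
      have := mul_nonneg hA0 hO; linarith
    have h5 : |q x| ≤ Real.sqrt (S/μ₀) * (A*O + 2*K) := by
      calc |q x| = Real.sqrt ((q x)^2) := (Real.sqrt_sq_eq_abs _).symm
        _ ≤ Real.sqrt ((S/μ₀) * (A*O + 2*K)^2) := Real.sqrt_le_sqrt h4
        _ = Real.sqrt (S/μ₀) * (A*O + 2*K) := by
            rw [Real.sqrt_mul (div_nonneg hS.le hμ₀.le), Real.sqrt_sq h6]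
    calc |q x| ≤ Real.sqrt (S/μ₀) * (A*O + 2*K) := h5
      _ ≤ C₅ * (O + K) := by
          rw [hC₅_def]
          nlinarith only [hsqrtSμ, hA0, hO, hK0, mul_nonneg hsqrtSμ (mul_nonneg hA0 hK0),
            mul_nonneg hsqrtSμ hO, hOK]
  -- anchors
  have hOK1 : (1:ℝ) ≤ O + K := by linarith only [hO, hK1]
  have hCK1 : (1:ℝ) ≤ C₅ * K := by nlinarith only [hC₅1, hK1]
  have hC₅K : (1:ℝ) ≤ C₅ * K * (O+K) := by nlinarith only [hCK1, hOK1]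
  have hC₅Kpos : (0:ℝ) < C₅ * K * (O+K) := by linarith only [hC₅K]
  obtain ⟨L, hL_def⟩ : ∃ L : ℝ, L = Real.log (C₅ * K * (O + K)) := ⟨_, rfl⟩
  have hL0 : 0 ≤ L := by rw [hL_def]; exact Real.log_nonneg hC₅K
  have hanchp : ∀ x, K⁻¹ ≤ |hp x| → u x ≤ L := by
    intro x hx
    have h1 : K⁻¹ * Real.exp (u x) ≤ |p x| := by
      simp only [hp_def, abs_mul, abs_of_pos (Real.exp_pos (u x))]
      exact mul_le_mul_of_nonneg_right hx (Real.exp_pos _).le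
    have h3 : K⁻¹ * Real.exp (u x) ≤ C₅ * (O+K) := le_trans h1 (hbdp x)
    have h4 := mul_le_mul_of_nonneg_left h3 hK0
    rw [← mul_assoc, hKK, one_mul] at h4
    have h5 : Real.exp (u x) ≤ C₅ * K * (O+K) := by nlinarith only [h4]
    rw [hL_def]
    calc u x = Real.log (Real.exp (u x)) := (Real.log_exp _).symm
      _ ≤ Real.log (C₅ * K * (O+K)) := Real.log_le_log (Real.exp_pos _) h5
  have hanchm : ∀ x, K⁻¹ ≤ |hm x| → -u x ≤ L := by
    intro x hx
    have h1 : K⁻¹ * Real.exp (-u x) ≤ |q x| := by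
      simp only [hq_def, abs_mul, abs_of_pos (Real.exp_pos (-u x))]
      exact mul_le_mul_of_nonneg_right hx (Real.exp_pos _).le
    have h3 : K⁻¹ * Real.exp (-u x) ≤ C₅ * (O+K) := le_trans h1 (hbdq x)
    have h4 := mul_le_mul_of_nonneg_left h3 hK0
    rw [← mul_assoc, hKK, one_mul] at h4
    have h5 : Real.exp (-u x) ≤ C₅ * K * (O+K) := by nlinarith only [h4]
    rw [hL_def]
    calc -u x = Real.log (Real.exp (-u x)) := (Real.log_exp _).symm
      _ ≤ Real.log (C₅ * K * (O+K)) := Real.log_le_log (Real.exp_pos _) h5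
  obtain ⟨x₁, -, hx₁⟩ := Finset.exists_mem_eq_sup' (Finset.univ_nonempty (α := V))
    (fun x => |hp x|)
  have hhp1 : K⁻¹ ≤ |hp x₁| := by
    simp only [maxV] at hp1
    rw [hx₁] at hp1
    exact hp1
  obtain ⟨x₂, -, hx₂⟩ := Finset.exists_mem_eq_sup' (Finset.univ_nonempty (α := V))
    (fun x => |hm x|)
  have hhm1 : K⁻¹ ≤ |hm x₂| := by
    simp only [maxV] at hm1
    rw [hx₂] at hm1
    exact hm1
  have hM_le : M ≤ L + O := by
    have h1 := hanchp x₁ hhp1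
    have h2 := hlb x₁
    rw [hO_def]; linarith only [h1, h2]
  have hm_le : -m ≤ L + O := by
    have h1 := hanchm x₂ hhm1
    have h2 := hub x₂
    rw [hO_def]; linarith only [h1, h2]
  have habs : ∀ x, |u x| ≤ L + O := by
    intro x
    rw [abs_le]
    constructor
    · linarith only [hlb x, hm_le, hO_def]
    · linarith only [hub x, hM_le]
  -- pointwise product bound
  have hptw : ∀ x, u x * (p x + q x - c) ≤ 2*(C₅*L*(O+K)) + 3*((L+O)*K) := by
    intro x
    have hB1 : (0:ℝ) ≤ C₅*L*(O+K) :=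
      mul_nonneg (mul_nonneg hC₅0.le hL0) (by linarith only [hO, hK0])
    have hB2 : (0:ℝ) ≤ (L+O)*K := mul_nonneg (by linarith only [hL0, hO]) hK0
    have hup : u x * p x ≤ C₅*L*(O+K) + (L+O)*K := by
      rcases hdichp x with hneg | hpos
      · have hp0 : p x ≤ 0 := by
          simp only [hp_def]
          exact mul_nonpos_of_nonpos_of_nonneg hneg (Real.exp_pos _).le
        rcases le_or_gt 0 (u x) with hu | hu
        · nlinarith only [mul_nonneg hu (neg_nonneg.mpr hp0), hB1, hB2]
        · have h1 : Real.exp (u x) ≤ 1 := by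
            rw [show (1:ℝ) = Real.exp 0 from Real.exp_zero.symm]
            exact Real.exp_le_exp.mpr hu.le
          have h2 : -hp x ≤ K := le_trans (neg_le_abs _) (hpK x)
          have hpabs : -p x ≤ K := by
            simp only [hp_def]
            nlinarith only [mul_le_mul_of_nonneg_right h2 (Real.exp_pos (u x)).le,
              mul_le_mul_of_nonneg_left h1 hK0]
          have huabs : -u x ≤ L + O := le_trans (neg_le_abs _) (habs x)
          nlinarith only [mul_le_mul huabs hpabs (by linarith only [hp0]) (by linarith only [hL0, hO]), hB1]
      · have hpx0 : 0 ≤ p x := by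
          simp only [hp_def]
          exact mul_nonneg (by linarith only [hKinv, hpos]) (Real.exp_pos _).le
        have hux : u x ≤ L := hanchp x (le_trans hpos (le_abs_self _))
        rcases le_or_gt (u x) 0 with hu | hu
        · nlinarith only [mul_nonneg (neg_nonneg.mpr hu) hpx0, hB1, hB2]
        · have h1 : u x * p x ≤ L * (C₅*(O+K)) :=
            mul_le_mul hux (le_trans (le_abs_self _) (hbdp x)) hpx0 hL0
          nlinarith only [h1, hB2]
    have huq : u x * q x ≤ C₅*L*(O+K) + (L+O)*K := by
      rcases hdichm x with hposm | hnegm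
      · have hq0 : 0 ≤ q x := by
          simp only [hq_def]
          exact mul_nonneg hposm (Real.exp_pos _).le
        rcases le_or_gt (u x) 0 with hu | hu
        · nlinarith only [mul_nonneg (neg_nonneg.mpr hu) hq0, hB1, hB2]
        · have h1 : Real.exp (-u x) ≤ 1 := by
            rw [show (1:ℝ) = Real.exp 0 from Real.exp_zero.symm]
            exact Real.exp_le_exp.mpr (by linarith only [hu])
          have h2 : hm x ≤ K := le_trans (le_abs_self _) (hmK x)
          have hqabs : q x ≤ K := by
            simp only [hq_def]
            nlinarith only [mul_le_mul_of_nonneg_right h2 (Real.exp_pos (-u x)).le,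
              mul_le_mul_of_nonneg_left h1 hK0]
          have huabs : u x ≤ L + O := le_trans (le_abs_self _) (habs x)
          nlinarith only [mul_le_mul huabs hqabs (by linarith only [hq0]) (by linarith only [hL0, hO]), hB1]
      · have hq0 : q x ≤ 0 := by
          simp only [hq_def]
          exact mul_nonpos_of_nonpos_of_nonneg (by linarith only [hKinv, hnegm]) (Real.exp_pos _).le
        have hux : -u x ≤ L := by
          refine hanchm x ?_
          calc K⁻¹ ≤ -hm x := by linarith only [hnegm]
            _ ≤ |hm x| := neg_le_abs _
        rcases le_or_gt 0 (u x) with hu | hu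
        · nlinarith only [mul_nonneg hu (neg_nonneg.mpr hq0), hB1, hB2]
        · have h1 : u x * q x ≤ L * (C₅*(O+K)) := by
            have h7 := mul_le_mul hux (le_trans (neg_le_abs _) (hbdq x))
              (by linarith only [hq0]) hL0
            nlinarith only [h7]
          nlinarith only [h1, hB2]
    have hucx : u x * (-c) ≤ (L+O)*K := by
      calc u x * (-c) ≤ |u x * (-c)| := le_abs_self _
        _ = |u x| * |c| := by rw [abs_mul, abs_neg]
        _ ≤ (L+O)*K := mul_le_mul (habs x) hc (abs_nonneg _) (by linarith only [hL0, hO])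
    nlinarith only [hup, huq, hucx]
  -- energy upper bound
  have hEub : ∑ x, ∑ y, ω x y * (u x - u y)^2
      ≤ 2*S*(2*(C₅*L*(O+K)) + 3*((L+O)*K)) := by
    rw [hEeq]
    have h1 : ∑ x, μ x * (u x * (p x + q x - c))
        ≤ ∑ x, μ x * (2*(C₅*L*(O+K)) + 3*((L+O)*K)) :=
      Finset.sum_le_sum fun x _ => mul_le_mul_of_nonneg_left (hptw x) (hμ x).le
    have h2 : ∑ x, μ x * (2*(C₅*L*(O+K)) + 3*((L+O)*K))
        = (2*(C₅*L*(O+K)) + 3*((L+O)*K)) * S := by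
      rw [hS_def, Finset.mul_sum]
      exact Finset.sum_congr rfl fun x _ => mul_comm _ _
    nlinarith only [h1, h2]
  -- oscillation lower bound via energy
  have hOE : O^2 ≤ Q * (∑ x, ∑ y, ω x y * (u x - u y)^2) := by
    obtain ⟨xM, -, hxM⟩ := Finset.exists_mem_eq_sup' (Finset.univ_nonempty (α := V)) u
    obtain ⟨xm, -, hxm⟩ := Finset.exists_mem_eq_inf' (Finset.univ_nonempty (α := V)) u
    have h3 : O = u xM - u xm := by
      rw [hO_def, hM_def, hm_def, maxV, minV, hxM, hxm]
    have h1 : O ≤ κ xM xm * Real.sqrt (∑ x, ∑ y, ω x y * (u x - u y)^2) := by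
      rw [h3]
      exact le_trans (le_abs_self _) (hκ xM xm u)
    have h4 : 0 ≤ Real.sqrt (∑ x, ∑ y, ω x y * (u x - u y)^2) := Real.sqrt_nonneg _
    have h5 : O ≤ κs * Real.sqrt (∑ x, ∑ y, ω x y * (u x - u y)^2) :=
      le_trans h1 (mul_le_mul_of_nonneg_right (hκs_le xM xm) h4)
    calc O^2 ≤ (κs * Real.sqrt (∑ x, ∑ y, ω x y * (u x - u y)^2))^2 :=
          pow_le_pow_left₀ hO h5 2
      _ = κs^2 * (Real.sqrt (∑ x, ∑ y, ω x y * (u x - u y)^2))^2 := by ring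
      _ = Q * (∑ x, ∑ y, ω x y * (u x - u y)^2) := by
          rw [Real.sq_sqrt hE0, hQ_def]
  have hO2 : O^2 ≤ R * ((L+K) * (L+O+K)) := by
    have h1 : O^2 ≤ Q * (2*S*(2*(C₅*L*(O+K)) + 3*((L+O)*K))) :=
      le_trans hOE (mul_le_mul_of_nonneg_left hEub hQpos.le)
    have hbr : 2*(C₅*L*(O+K)) + 3*((L+O)*K) ≤ (2*C₅+3)*((L+K)*(L+O+K)) := by
      nlinarith only [mul_nonneg hL0 hO, mul_nonneg hL0 hK0, mul_nonneg hO hK0,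
        mul_nonneg hL0 hL0, mul_nonneg hK0 hK0, hC₅1,
        mul_nonneg (mul_nonneg hC₅0.le hL0) hK0,
        mul_nonneg (mul_nonneg hC₅0.le hL0) hL0,
        mul_nonneg (mul_nonneg hC₅0.le hK0) hK0,
        mul_nonneg (mul_nonneg hC₅0.le hO) hK0]
    calc O^2 ≤ Q * (2*S*(2*(C₅*L*(O+K)) + 3*((L+O)*K))) := h1
      _ ≤ Q * (2*S*((2*C₅+3)*((L+K)*(L+O+K)))) := by
          refine mul_le_mul_of_nonneg_left ?_ hQpos.le
          refine mul_le_mul_of_nonneg_left hbr ?_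
          linarith only [hS]
      _ = R * ((L+K)*(L+O+K)) := by rw [hR_def]; ring
  -- log bound
  have hLbd : L ≤ G*K + 2*Real.sqrt O := by
    have l1 : L = Real.log C₅ + Real.log K + Real.log (O+K) := by
      rw [hL_def, Real.log_mul (by positivity) hOK.ne', Real.log_mul hC₅0.ne' hK.ne']
    have l2 : Real.log C₅ ≤ C₅ - 1 := Real.log_le_sub_one_of_pos hC₅0
    have l3 : Real.log K ≤ K - 1 := Real.log_le_sub_one_of_pos hK
    have l4 : Real.log (O+K) ≤ 2*Real.sqrt O + K - 1 := by
      have l5 : O + K ≤ (1+O)*K := by nlinarith only [hO, hK1]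
      have l6 : Real.log (O+K) ≤ Real.log ((1+O)*K) := Real.log_le_log hOK l5
      rw [Real.log_mul (by positivity) hK.ne'] at l6
      have l7 : Real.log (1+O) ≤ 2*Real.sqrt O := by
        have e1 : Real.log (1+O) = 2 * Real.log (Real.sqrt (1+O)) := by
          rw [Real.log_sqrt (by linarith)]; ring
        have e2 : Real.log (Real.sqrt (1+O)) ≤ Real.sqrt (1+O) - 1 :=
          Real.log_le_sub_one_of_pos (Real.sqrt_pos.mpr (by linarith))
        have e3 : Real.sqrt (1+O) ≤ 1 + Real.sqrt O := by
          rw [show (1:ℝ) + Real.sqrt O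
              = Real.sqrt ((1 + Real.sqrt O)^2) from
              (Real.sqrt_sq (by positivity)).symm]
          apply Real.sqrt_le_sqrt
          nlinarith only [Real.sq_sqrt hO, Real.sqrt_nonneg O]
        linarith
      linarith
    rw [hG_def]
    have l8 : (0:ℝ) ≤ C₅ * (K - 1) := mul_nonneg (by linarith) (by linarith)
    linarith only [l1, l2, l3, l4, hK1, hC₅1, l8]
  -- solve for O
  obtain ⟨s, hs_def⟩ : ∃ s : ℝ, s = Real.sqrt O := ⟨_, rfl⟩
  have hs0 : 0 ≤ s := by rw [hs_def]; exact Real.sqrt_nonneg O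
  have hsq : s^2 = O := by rw [hs_def]; exact Real.sq_sqrt hO
  rw [← hs_def] at hLbd
  have hORT : O ≤ R' * ((G+1)*K + 2*s) := by
    by_contra hcon
    push_neg at hcon
    have hT1 : 1 ≤ (G+1)*K + 2*s := by nlinarith only [hG, hK1, hs0]
    have hTpos : 0 < (G+1)*K + 2*s := by linarith only [hT1]
    have hOpos : 0 < O := by nlinarith only [hcon, hR'1, hT1]
    have hO2T : O^2 ≤ R * (((G+1)*K + 2*s) * ((G+1)*K + 2*s + O)) := by
      refine le_trans hO2 ?_
      have hLK : L + K ≤ (G+1)*K + 2*s := by linarith only [hLbd]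
      have hLOK : L + O + K ≤ (G+1)*K + 2*s + O := by linarith only [hLK]
      have f1 : 0 ≤ L + O + K := by linarith only [hL0, hO, hK0]
      refine mul_le_mul_of_nonneg_left ?_ hR.le
      exact mul_le_mul hLK hLOK f1 (by linarith only [hTpos])
    have b1 : R'*O^2 ≤ R'*(R*(((G+1)*K + 2*s) * ((G+1)*K + 2*s + O))) :=
      mul_le_mul_of_nonneg_left hO2T (by linarith only [hR'1])
    have b2 : R*((G+1)*K + 2*s + O)*(R'*((G+1)*K + 2*s))
        < R*((G+1)*K + 2*s + O)*O := by
      apply mul_lt_mul_of_pos_left hcon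
      exact mul_pos hR (by linarith only [hTpos, hOpos])
    have b3 : R'*O^2 < R*((G+1)*K + 2*s + O)*O := by
      have beq : R'*(R*(((G+1)*K + 2*s) * ((G+1)*K + 2*s + O)))
          = R*((G+1)*K + 2*s + O)*(R'*((G+1)*K + 2*s)) := by ring
      linarith only [b1, b2, beq.le, beq.ge]
    have b4 : R'*O < R*((G+1)*K + 2*s + O) := by
      by_contra hb
      push_neg at hb
      nlinarith only [mul_le_mul_of_nonneg_right hb hOpos.le, b3]
    rw [hR'_def] at b4 hcon
    have b5 := mul_lt_mul_of_pos_left hcon (show (0:ℝ) < R+1 by linarith only [hR])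
    linarith only [b4, b5, hTpos, mul_pos hR hTpos, mul_pos (mul_pos hR hR) hTpos]
  have hOΓ : O ≤ Γ*K := by
    have c1 : 2*(R'*s) ≤ O/2 + 2*R'^2 := by nlinarith only [sq_nonneg (s - 2*R'), hsq]
    have c2 : O ≤ R'*((G+1)*K) + O/2 + 2*R'^2 := by nlinarith only [hORT, c1]
    rw [hΓ_def]
    linarith only [c2, hK1,
      mul_nonneg (by linarith only [hK1] : (0:ℝ) ≤ K - 1) (sq_nonneg R'),
      mul_nonneg (by linarith only [hK1] : (0:ℝ) ≤ K - 1)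
        (mul_nonneg (by linarith only [hR'1] : (0:ℝ) ≤ R')
          (by linarith only [hG] : (0:ℝ) ≤ G+1))]
  -- conclusion
  have hfinal : maxV (fun x => |u x|) ≤ L + O := by
    rw [maxV]
    exact Finset.sup'_le _ _ fun x _ => habs x
  have h2s : 2*s ≤ 1 + O := by nlinarith only [sq_nonneg (s-1), hsq]
  calc maxV (fun x => |u x|) ≤ L + O := hfinal
    _ ≤ (G*K + 2*s) + O := by linarith only [hLbd]
    _ ≤ G*K + 1 + 2*O := by linarith only [h2s]
    _ ≤ (G + 1 + 2*Γ)*K := by nlinarith only [hOΓ, hK1]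
end

section
/- Let h₊, h₋ : V → ℝ both be nonzero functions such that {x ∈ V : h₊(x) > 0} = {x ∈ V : h₋(x) < 0}, and let c ∈ ℝ. Then the sinh-Gordon equation −Δu = h₊e^{u} + h₋e^{−u} − c has at least one solution u : V → ℝ. -/
open Finset Real Filter

/-!
Solutions are the critical points of the energy
`E u = ¼ ∑ x, ∑ y, ω x y (u y - u x)² + ∑ x, μ x (-h₊ x exp (u x) + h₋ x exp (-u x) + c u x)`.
Let `A = {h₊ > 0} = {h₋ < 0}`: the potential is convex at the vertices outside `A`, and concave
and tending to `-∞` exponentially at the vertices of `A`. If `A` is empty, `E` is convex, and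
coercive because `h₊` and `h₋` are nonzero, so it has a global minimum. Otherwise we argue by
minimax: fixing the values `v` on `A` and minimising over the other values gives `β v`, which
depends Lipschitz-continuously on `v` by a Poincaré inequality for functions vanishing on `A`;
the reduced energy `v ↦ E (β v)` tends to `-∞`, so it attains a maximum, and at that maximum all
partial derivatives of `E` at `β v` vanish.
-/

open Topology

namespace SinhGordon
variable {V : Type*} [Fintype V]

lemma sq_norm_le_of_forall_sq_le {f : V → ℝ} {M : ℝ} (hM : 0 ≤ M) (h : ∀ y, f y ^ 2 ≤ M) :
    ‖f‖ ^ 2 ≤ M := by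
  have : ‖f‖ ≤ √M := (pi_norm_le_iff_of_nonneg (sqrt_nonneg M)).2 fun y =>
    (norm_eq_abs (f y)).trans_le (abs_le_sqrt (h y))
  simpa [sq_sqrt hM] using pow_le_pow_left₀ (norm_nonneg f) this 2

lemma neg_mul_norm_le_sum_mul (g w : V → ℝ) : -((∑ z, |g z|) * ‖w‖) ≤ ∑ z, w z * g z := by
  rw [sum_mul, ← sum_neg_distrib]
  refine sum_le_sum fun z _ => ?_
  have hwz : |w z| ≤ ‖w‖ := norm_le_pi_norm w z
  calc -(|g z| * ‖w‖) ≤ -|w z * g z| := by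
        rw [abs_mul, mul_comm]; exact neg_le_neg (by gcongr)
    _ ≤ w z * g z := neg_abs_le _

lemma tendsto_atTop_of_quadratic_le {f : (V → ℝ) → ℝ} {S : Set (V → ℝ)} (p : V → ℝ)
    {a b d : ℝ} (ha : 0 < a) (h : ∀ u ∈ S, a * ‖u - p‖ ^ 2 - b * ‖u - p‖ + d ≤ f u) :
    Tendsto f (cocompact (V → ℝ) ⊓ 𝓟 S) atTop := by
  have hnorm : Tendsto (fun u : V → ℝ => ‖u - p‖) (cocompact _) atTop :=
    tendsto_atTop_mono (fun u => by linarith [norm_sub_norm_le u p])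
      (tendsto_atTop_add_const_right _ (-‖p‖) tendsto_norm_cocompact_atTop)
  have hquad : Tendsto (fun r : ℝ => a * r ^ 2 - b * r + d) atTop atTop := by
    have := tendsto_atTop_add_const_right _ d (tendsto_id.atTop_mul_atTop₀
      (tendsto_atTop_add_const_right _ (-b) (tendsto_id.const_mul_atTop ha)))
    refine this.congr fun r => ?_
    simp only [id]; ring
  exact tendsto_atTop_mono' _ (eventually_inf_principal.2 (Eventually.of_forall h))
    ((hquad.comp hnorm).mono_left inf_le_left)

lemma isClosed_setOf_eqOn {ι X : Type*} [TopologicalSpace X] [T2Space X] (s : Set ι)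
    (v : ι → X) : IsClosed {u : ι → X | Set.EqOn u v s} := by
  have : {u : ι → X | Set.EqOn u v s} = ⋂ x ∈ s, {u | u x = v x} := by ext; simp [Set.EqOn]
  rw [this]
  exact isClosed_biInter fun x _ => isClosed_eq (continuous_apply x) continuous_const

lemma tendsto_quadratic_sub_exp_atBot (a b d : ℝ) {κ : ℝ} (hκ : 0 < κ) :
    Tendsto (fun r => a * r ^ 2 + b * r + d - κ * exp r) atTop atBot := by
  have hlittle : (fun r : ℝ => a * r ^ 2 + b * r + d) =o[atTop] exp :=
    ((isLittleO_pow_exp_atTop.const_mul_left a).add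
      (by simpa using (isLittleO_pow_exp_atTop (n := 1)).const_mul_left b)).add
      (by simpa using (isLittleO_pow_exp_atTop (n := 0)).const_mul_left d)
  have hev : ∀ᶠ r in atTop, a * r ^ 2 + b * r + d - κ * exp r ≤ -(κ / 2) * exp r := by
    filter_upwards [hlittle.bound (half_pos hκ)] with r hr
    rw [norm_eq_abs, norm_eq_abs, abs_of_pos (exp_pos r)] at hr
    linarith [le_abs_self (a * r ^ 2 + b * r + d)]
  exact tendsto_atBot_mono' _ hev (tendsto_exp_atTop.const_mul_atTop_of_neg (by linarith))

section Dirichlet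
variable (ω : V → V → ℝ)

/-- The factor `1 / 4` makes `-∑ y, ω z y * (u y - u z)` the partial derivative of
`u ↦ dirichletForm ω u u` (`two_mul_dirichletForm`). -/
noncomputable def dirichletForm : LinearMap.BilinForm ℝ (V → ℝ) :=
  LinearMap.mk₂ ℝ (fun u v => (1 / 4) * ∑ x, ∑ y, ω x y * (u y - u x) * (v y - v x))
    (fun u u' v => by simp only [Pi.add_apply, ← mul_add, ← sum_add_distrib]; congr! 3; ring)
    (fun t u v => by
      simp only [Pi.smul_apply, smul_eq_mul, mul_sum]
      exact sum_congr rfl fun _ _ => sum_congr rfl fun _ _ => by ring)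
    (fun u v v' => by simp only [Pi.add_apply, ← mul_add, ← sum_add_distrib]; congr! 3; ring)
    (fun t u v => by
      simp only [Pi.smul_apply, smul_eq_mul, mul_sum]
      exact sum_congr rfl fun _ _ => sum_congr rfl fun _ _ => by ring)

lemma dirichletForm_apply (u v : V → ℝ) :
    dirichletForm ω u v = (1 / 4) * ∑ x, ∑ y, ω x y * (u y - u x) * (v y - v x) := rfl

lemma dirichletForm_comm (u v : V → ℝ) : dirichletForm ω u v = dirichletForm ω v u := by
  simp only [dirichletForm_apply]; congr! 3; ring

lemma continuous_dirichletForm_self : Continuous fun u : V → ℝ => dirichletForm ω u u := by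
  simp only [dirichletForm_apply]; fun_prop

lemma exists_abs_dirichletForm_le : ∃ C ≥ 0, ∀ u v : V → ℝ,
    |dirichletForm ω u v| ≤ C * ‖u‖ * ‖v‖ := by
  let B := LinearMap.toContinuousLinearMap
    (LinearMap.toContinuousLinearMap.toLinearMap ∘ₗ dirichletForm ω)
  exact ⟨‖B‖, norm_nonneg B, fun u v => B.le_opNorm₂ u v⟩

lemma two_mul_dirichletForm (hsymm : ∀ x y, ω x y = ω y x) (u w : V → ℝ) :
    2 * dirichletForm ω u w = ∑ z, w z * -∑ y, ω z y * (u y - u z) := by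
  have hswap : ∑ x, ∑ y, ω x y * (u y - u x) * w y = -∑ x, ∑ y, ω x y * (u y - u x) * w x := by
    rw [sum_comm, ← sum_neg_distrib]
    refine sum_congr rfl fun x _ => ?_
    rw [← sum_neg_distrib]
    exact sum_congr rfl fun y _ => by rw [hsymm]; ring
  have hsplit : ∑ x, ∑ y, ω x y * (u y - u x) * (w y - w x)
      = ∑ x, ∑ y, ω x y * (u y - u x) * w y - ∑ x, ∑ y, ω x y * (u y - u x) * w x := by
    simp only [mul_sub, sum_sub_distrib]
  have hrhs : ∑ z, w z * -∑ y, ω z y * (u y - u z) = -∑ x, ∑ y, ω x y * (u y - u x) * w x := by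
    simp only [mul_neg, mul_sum, sum_neg_distrib, neg_inj]
    exact sum_congr rfl fun _ _ => sum_congr rfl fun _ _ => by ring
  rw [dirichletForm_apply, hsplit, hswap, hrhs]
  ring

variable {ω}

lemma dirichletForm_self_nonneg (hω : ∀ x y, 0 ≤ ω x y) (u : V → ℝ) :
    0 ≤ dirichletForm ω u u := by
  rw [dirichletForm_apply]
  exact mul_nonneg (by norm_num) <| sum_nonneg fun x _ => sum_nonneg fun y _ => by
    rw [mul_assoc]; exact mul_nonneg (hω x y) (mul_self_nonneg _)

lemma mul_sq_sub_le_dirichletForm (hω : ∀ x y, 0 ≤ ω x y) (u : V → ℝ) (a b : V) :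
    ω a b * (u b - u a) ^ 2 ≤ 4 * dirichletForm ω u u := by
  have hterm : ∀ x y, 0 ≤ ω x y * (u y - u x) * (u y - u x) := fun x y => by
    rw [mul_assoc]; exact mul_nonneg (hω x y) (mul_self_nonneg _)
  have := (single_le_sum (fun y _ => hterm a y) (mem_univ b)).trans
    (single_le_sum (f := fun x => ∑ y, ω x y * (u y - u x) * (u y - u x))
      (fun x _ => sum_nonneg fun y _ => hterm x y) (mem_univ a))
  rw [dirichletForm_apply]
  linarith

lemma sq_sub_le_dirichletForm_of_path (hω : ∀ x y, 0 ≤ ω x y) (u : V → ℝ) {n : ℕ} {p : ℕ → V}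
    (hp : ∀ i < n, 0 < ω (p i) (p (i + 1))) :
    (u (p n) - u (p 0)) ^ 2
      ≤ (n * ∑ i ∈ range n, 4 / ω (p i) (p (i + 1))) * dirichletForm ω u u := by
  have hedge : ∀ i ∈ range n, (u (p (i + 1)) - u (p i)) ^ 2
      ≤ 4 / ω (p i) (p (i + 1)) * dirichletForm ω u u := fun i hi => by
    have hpos := hp i (mem_range.1 hi)
    rw [div_mul_eq_mul_div, le_div_iff₀ hpos, mul_comm]
    exact mul_sq_sub_le_dirichletForm hω u _ _
  calc (u (p n) - u (p 0)) ^ 2 = (∑ i ∈ range n, (u (p (i + 1)) - u (p i))) ^ 2 := by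
        rw [sum_range_sub (fun i => u (p i))]
    _ ≤ n * ∑ i ∈ range n, (u (p (i + 1)) - u (p i)) ^ 2 := by
        simpa only [card_range] using
          sq_sum_le_card_mul_sum_sq (s := range n) (f := fun i => u (p (i + 1)) - u (p i))
    _ ≤ n * ∑ i ∈ range n, 4 / ω (p i) (p (i + 1)) * dirichletForm ω u u := by
        gcongr with i hi; exact hedge i hi
    _ = _ := by rw [← sum_mul, mul_assoc]

lemma exists_pos_mul_sq_norm_sub_const_le (hω : ∀ x y, 0 ≤ ω x y) (hconn : graphConnected ω)
    (x₀ : V) : ∃ κ > 0, ∀ u : V → ℝ, κ * ‖u - fun _ => u x₀‖ ^ 2 ≤ dirichletForm ω u u := by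
  have hpath : ∀ y, ∃ K, 0 ≤ K ∧ ∀ u : V → ℝ, (u y - u x₀) ^ 2 ≤ K * dirichletForm ω u u := by
    intro y
    obtain ⟨n, p, rfl, rfl, hp⟩ := hconn x₀ y
    refine ⟨_, ?_, fun u => sq_sub_le_dirichletForm_of_path hω u hp⟩
    exact mul_nonneg n.cast_nonneg <| sum_nonneg fun i hi =>
      div_nonneg zero_le_four (hp i (mem_range.1 hi)).le
  choose K hK0 hK using hpath
  have hS : 0 ≤ ∑ y, K y := sum_nonneg fun y _ => hK0 y
  refine ⟨1 / (∑ y, K y + 1), by positivity, fun u => ?_⟩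
  have : ‖u - fun _ => u x₀‖ ^ 2 ≤ (∑ y, K y + 1) * dirichletForm ω u u := by
    refine sq_norm_le_of_forall_sq_le (by positivity [dirichletForm_self_nonneg hω u]) fun y => ?_
    refine (hK y u).trans (mul_le_mul_of_nonneg_right ?_ (dirichletForm_self_nonneg hω u))
    linarith [single_le_sum (fun y _ => hK0 y) (mem_univ y)]
  rw [div_mul_eq_mul_div, one_mul, div_le_iff₀ (by positivity), mul_comm]
  exact this

lemma exists_pos_mul_sq_norm_le_of_apply_eq_zero (hω : ∀ x y, 0 ≤ ω x y)
    (hconn : graphConnected ω) (x₀ : V) :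
    ∃ κ > 0, ∀ u : V → ℝ, u x₀ = 0 → κ * ‖u‖ ^ 2 ≤ dirichletForm ω u u := by
  obtain ⟨κ, hκ, hP⟩ := exists_pos_mul_sq_norm_sub_const_le hω hconn x₀
  refine ⟨κ, hκ, fun u hu => ?_⟩
  simpa [hu, ← Pi.zero_def] using hP u

end Dirichlet

section Potential
variable (a b c : ℝ)

noncomputable def potential (t : ℝ) : ℝ := -a * exp t + b * exp (-t) + c * t

noncomputable def potentialDeriv (t : ℝ) : ℝ := c - a * exp t - b * exp (-t)

lemma hasDerivAt_potential (t : ℝ) :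
    HasDerivAt (potential a b c) (potentialDeriv a b c t) t := by
  have h : HasDerivAt (fun t => -a * exp t + b * exp (-t) + c * t)
      (-a * exp t + b * (exp (-t) * -1) + c * 1) t :=
    (((hasDerivAt_exp t).const_mul (-a)).add ((hasDerivAt_neg t).exp.const_mul b)).add
      ((hasDerivAt_id' t).const_mul c)
  exact h.congr_deriv (by simp only [potentialDeriv]; ring)

lemma potential_add_sub_sub (r s : ℝ) :
    potential a b c (r + s) - potential a b c r - potentialDeriv a b c r * s
      = -a * exp r * (exp s - 1 - s) + b * exp (-r) * (exp (-s) - 1 + s) := by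
  simp only [potential, potentialDeriv, neg_add, exp_add]; ring

lemma potential_add_sub_sub_le (r : ℝ) {s : ℝ} (hs : |s| ≤ 1) :
    potential a b c (r + s) - potential a b c r - potentialDeriv a b c r * s
      ≤ (|a| + |b|) * exp |r| * s ^ 2 := by
  have h₁ : -a * exp r * (exp s - 1 - s) ≤ |a| * exp |r| * s ^ 2 :=
    calc _ ≤ |-a * exp r * (exp s - 1 - s)| := le_abs_self _
      _ = |a| * exp r * |exp s - 1 - s| := by
        rw [abs_mul, abs_mul, abs_neg, abs_of_pos (exp_pos r)]
      _ ≤ _ := by gcongr; exacts [le_abs_self r, abs_exp_sub_one_sub_id_le hs]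
  have h₂ : b * exp (-r) * (exp (-s) - 1 + s) ≤ |b| * exp |r| * s ^ 2 :=
    calc _ ≤ |b * exp (-r) * (exp (-s) - 1 + s)| := le_abs_self _
      _ = |b| * exp (-r) * |exp (-s) - 1 - -s| := by
        rw [abs_mul, abs_mul, abs_of_pos (exp_pos (-r)), sub_neg_eq_add]
      _ ≤ _ := by
        gcongr
        · exact neg_le_abs r
        · simpa using abs_exp_sub_one_sub_id_le (x := -s) (by rwa [abs_neg])
  rw [potential_add_sub_sub]
  linarith

variable {a b}

lemma potential_add_sub_sub_nonneg (ha : a ≤ 0) (hb : 0 ≤ b) (r s : ℝ) :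
    0 ≤ potential a b c (r + s) - potential a b c r - potentialDeriv a b c r * s := by
  rw [potential_add_sub_sub]
  have h₁ : 0 ≤ exp s - 1 - s := by linarith [add_one_le_exp s]
  have h₂ : 0 ≤ exp (-s) - 1 + s := by linarith [add_one_le_exp (-s)]
  exact add_nonneg (mul_nonneg (mul_nonneg (neg_nonneg.2 ha) (exp_pos r).le) h₁)
    (mul_nonneg (mul_nonneg hb (exp_pos (-r)).le) h₂)

lemma monotone_potentialDeriv (ha : a ≤ 0) (hb : 0 ≤ b) : Monotone (potentialDeriv a b c) :=
  fun r s hrs => by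
    have := mul_le_mul_of_nonpos_left (exp_le_exp.2 hrs) ha
    have := mul_le_mul_of_nonneg_left (exp_le_exp.2 (neg_le_neg hrs)) hb
    simp only [potentialDeriv]; linarith

lemma potential_le (ha : 0 < a) (hb : b < 0) (t : ℝ) :
    potential a b c t ≤ |c| * |t| - min a (-b) * exp |t| := by
  have hexp : exp |t| ≤ exp t + exp (-t) := by
    rcases abs_cases t with ⟨h, -⟩ | ⟨h, -⟩ <;> rw [h] <;> linarith [exp_pos t, exp_pos (-t)]
  have h₁ := mul_le_mul_of_nonneg_right (min_le_left a (-b)) (exp_pos t).le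
  have h₂ := mul_le_mul_of_nonneg_right (min_le_right a (-b)) (exp_pos (-t)).le
  have h₃ := mul_le_mul_of_nonneg_left hexp (lt_min ha (neg_pos.2 hb)).le
  have h₄ : c * t ≤ |c| * |t| := (le_abs_self _).trans (abs_mul c t).le
  simp only [potential]
  linarith

end Potential

section Energy
variable (ω : V → V → ℝ) (μ hp hm : V → ℝ) (c : ℝ)

noncomputable def energy (u : V → ℝ) : ℝ :=
  dirichletForm ω u u + ∑ x, μ x * potential (hp x) (hm x) c (u x)

noncomputable def energyGrad (u : V → ℝ) (z : V) : ℝ :=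
  -∑ y, ω z y * (u y - u z) + μ z * potentialDeriv (hp z) (hm z) c (u z)

lemma continuous_energy : Continuous (energy ω μ hp hm c) := by
  have := continuous_dirichletForm_self ω
  unfold energy potential
  fun_prop

variable {ω}

lemma sum_mul_energyGrad (hsymm : ∀ x y, ω x y = ω y x) (u w : V → ℝ) :
    ∑ z, w z * energyGrad ω μ hp hm c u z
      = 2 * dirichletForm ω u w + ∑ x, μ x * potentialDeriv (hp x) (hm x) c (u x) * w x := by
  simp only [energyGrad, mul_add, sum_add_distrib, two_mul_dirichletForm ω hsymm]
  congr 1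
  exact sum_congr rfl fun _ _ => by ring

lemma energy_add (hsymm : ∀ x y, ω x y = ω y x) (u w : V → ℝ) :
    energy ω μ hp hm c (u + w) = energy ω μ hp hm c u + ∑ z, w z * energyGrad ω μ hp hm c u z
      + dirichletForm ω w w + ∑ x, μ x * (potential (hp x) (hm x) c (u x + w x)
        - potential (hp x) (hm x) c (u x) - potentialDeriv (hp x) (hm x) c (u x) * w x) := by
  simp only [energy, sum_mul_energyGrad μ hp hm c hsymm, map_add, LinearMap.add_apply,
    dirichletForm_comm ω w u, Pi.add_apply, mul_sub, sum_sub_distrib, mul_assoc]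
  ring

lemma hasDerivAt_energy_line (hsymm : ∀ x y, ω x y = ω y x) (u w : V → ℝ) :
    HasDerivAt (fun t : ℝ => energy ω μ hp hm c (u + t • w))
      (∑ z, w z * energyGrad ω μ hp hm c u z) 0 := by
  have hquad : HasDerivAt (fun t : ℝ => dirichletForm ω (u + t • w) (u + t • w))
      (2 * dirichletForm ω u w) 0 := by
    have heq : (fun t : ℝ => dirichletForm ω (u + t • w) (u + t • w))
        = fun t => dirichletForm ω u u + t * (2 * dirichletForm ω u w)
          + t ^ 2 * dirichletForm ω w w := by
      ext t
      simp only [map_add, map_smul, LinearMap.add_apply, LinearMap.smul_apply, smul_eq_mul,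
        dirichletForm_comm ω w u]
      ring
    rw [heq]
    exact (((hasDerivAt_const (0 : ℝ) (dirichletForm ω u u)).add
      ((hasDerivAt_id' (0 : ℝ)).mul_const (2 * dirichletForm ω u w))).add
      ((hasDerivAt_pow 2 (0 : ℝ)).mul_const (dirichletForm ω w w))).congr_deriv (by simp)
  have hpot : HasDerivAt (fun t : ℝ => ∑ x, μ x * potential (hp x) (hm x) c ((u + t • w) x))
      (∑ x, μ x * potentialDeriv (hp x) (hm x) c (u x) * w x) 0 := by
    refine HasDerivAt.fun_sum fun x _ => ?_
    have hlin : HasDerivAt (fun t : ℝ => (u + t • w) x) (w x) 0 := by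
      simpa using ((hasDerivAt_id' (0 : ℝ)).mul_const (w x)).const_add (u x)
    simpa [mul_assoc] using
      ((hasDerivAt_potential _ _ _ _).comp_of_eq 0 hlin (by simp)).const_mul (μ x)
  rw [sum_mul_energyGrad μ hp hm c hsymm]
  exact hquad.add hpot

lemma hasDerivAt_energy_single [DecidableEq V] (hsymm : ∀ x y, ω x y = ω y x) (u : V → ℝ)
    (z : V) : HasDerivAt (fun t : ℝ => energy ω μ hp hm c (u + t • Pi.single z 1))
      (energyGrad ω μ hp hm c u z) 0 := by
  simpa [Pi.single_apply] using hasDerivAt_energy_line μ hp hm c hsymm u (Pi.single z 1)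

lemma energyGrad_eq_zero_of_isMinOn [DecidableEq V] (hsymm : ∀ x y, ω x y = ω y x)
    {S : Set (V → ℝ)} {u : V → ℝ} {z : V} (hmin : IsMinOn (energy ω μ hp hm c) S u)
    (hline : ∀ t : ℝ, u + t • Pi.single z 1 ∈ S) : energyGrad ω μ hp hm c u z = 0 :=
  IsLocalMin.hasDerivAt_eq_zero (Eventually.of_forall fun t => by simpa using hmin (hline t))
    (hasDerivAt_energy_single μ hp hm c hsymm u z)

lemma energyGrad_eq_zero_iff {u : V → ℝ} {z : V} (hμz : μ z ≠ 0) :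
    energyGrad ω μ hp hm c u z = 0
      ↔ -graphLap ω μ u z = hp z * exp (u z) + hm z * exp (-u z) - c := by
  rw [graphLap, energyGrad, potentialDeriv,
    show ∀ S : ℝ, -(1 / μ z * S) = -S / μ z by intro S; ring, div_eq_iff hμz]
  constructor <;> intro h <;> linarith

lemma exists_energy_add_le (hsymm : ∀ x y, ω x y = ω y x) (hμ : ∀ x, 0 ≤ μ x) (R : ℝ) :
    ∃ C ≥ 0, ∀ u w : V → ℝ, ‖u‖ ≤ R → ‖w‖ ≤ 1 → energy ω μ hp hm c (u + w)
      ≤ energy ω μ hp hm c u + ∑ z, w z * energyGrad ω μ hp hm c u z + C * ‖w‖ ^ 2 := by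
  obtain ⟨C, hC0, hC⟩ := exists_abs_dirichletForm_le ω
  have hS : 0 ≤ ∑ x, μ x * (|hp x| + |hm x|) := sum_nonneg fun x _ => by
    have := hμ x; positivity
  refine ⟨C + (∑ x, μ x * (|hp x| + |hm x|)) * exp R, by positivity, fun u w hu hw => ?_⟩
  have hwx : ∀ x, |w x| ≤ ‖w‖ := fun x => norm_le_pi_norm w x
  have hrem : ∀ x, μ x * (potential (hp x) (hm x) c (u x + w x) - potential (hp x) (hm x) c (u x)
      - potentialDeriv (hp x) (hm x) c (u x) * w x)
        ≤ μ x * (|hp x| + |hm x|) * exp R * ‖w‖ ^ 2 := fun x => by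
    have hux : |u x| ≤ R := (norm_le_pi_norm u x).trans hu
    have hw2 : w x ^ 2 ≤ ‖w‖ ^ 2 := by
      rw [← sq_abs]; exact pow_le_pow_left₀ (abs_nonneg _) (hwx x) 2
    calc _ ≤ μ x * ((|hp x| + |hm x|) * exp |u x| * w x ^ 2) :=
          mul_le_mul_of_nonneg_left (potential_add_sub_sub_le _ _ _ _ ((hwx x).trans hw)) (hμ x)
      _ ≤ μ x * ((|hp x| + |hm x|) * exp R * ‖w‖ ^ 2) := by gcongr; exact hμ x
      _ = _ := by ring
  have hquad : dirichletForm ω w w ≤ C * ‖w‖ ^ 2 := by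
    linarith [le_abs_self (dirichletForm ω w w), hC w w]
  rw [energy_add μ hp hm c hsymm, add_mul, sum_mul, sum_mul]
  linarith [sum_le_sum fun x (_ : x ∈ univ) => hrem x]

end Energy

section Convex
variable {ω : V → V → ℝ} {μ hp hm : V → ℝ} {c : ℝ}

/-- Either `u` oscillates by an amount comparable to `‖u‖`, which the Dirichlet form detects, or
`u` stays close to `u x₁` and one of the two exponentials is large. -/
lemma exists_pos_mul_sq_norm_le_dirichletForm_add_exp (hω : ∀ x y, 0 ≤ ω x y) (hconn : graphConnected ω)
    (x₀ x₁ : V) {a b : ℝ} (ha : 0 < a) (hb : 0 < b) : ∃ ε > 0, ∀ u : V → ℝ,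
      ε * ‖u‖ ^ 2 ≤ dirichletForm ω u u + a * exp (u x₀) + b * exp (-u x₁) := by
  obtain ⟨κ, hκ, hP⟩ := exists_pos_mul_sq_norm_sub_const_le hω hconn x₁
  refine ⟨min (min (κ / 10) (a / 16)) (b / 4), by positivity, fun u => ?_⟩
  set s := u x₁
  set e := ‖u - fun _ => s‖
  have he : 0 ≤ e := norm_nonneg _
  have hnorm : ‖u‖ ≤ e + |s| := by
    calc ‖u‖ = ‖(u - fun _ => s) + fun _ => s‖ := by rw [sub_add_cancel]
      _ ≤ e + ‖fun _ : V => s‖ := norm_add_le _ _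
      _ ≤ e + |s| := by gcongr; exact pi_norm_const_le s
  have hx₀ : s - e ≤ u x₀ := by
    have := norm_le_pi_norm (u - fun _ => s) x₀
    rw [Pi.sub_apply, norm_eq_abs] at this
    linarith [neg_abs_le (u x₀ - s)]
  have hexp : ∀ r : ℝ, 0 ≤ r → r ^ 2 ≤ 2 * exp r := fun r hr => by
    linarith [quadratic_le_exp_of_nonneg hr]
  have hs : s ^ 2 ≤ 4 * e ^ 2 + 8 * exp (u x₀) + 2 * exp (-s) := by
    have h₀ := exp_pos (u x₀)
    have h₁ := exp_pos (-s)
    rcases lt_or_ge s 0 with hneg | hnonneg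
    · nlinarith [hexp (-s) (by linarith)]
    rcases le_or_gt s (2 * e) with hsmall | hlarge
    · nlinarith
    · nlinarith [hexp (u x₀) (by linarith)]
  have hQ := hP u
  have hmin₁ : min (min (κ / 10) (a / 16)) (b / 4) ≤ κ / 10 :=
    (min_le_left _ _).trans (min_le_left _ _)
  have hmin₂ : min (min (κ / 10) (a / 16)) (b / 4) ≤ a / 16 :=
    (min_le_left _ _).trans (min_le_right _ _)
  have hmin₃ : min (min (κ / 10) (a / 16)) (b / 4) ≤ b / 4 := min_le_right _ _
  have hsq : ‖u‖ ^ 2 ≤ 10 * e ^ 2 + 16 * exp (u x₀) + 4 * exp (-s) := by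
    have := pow_le_pow_left₀ (norm_nonneg u) hnorm 2
    nlinarith [sq_abs s, sq_nonneg (e - |s|)]
  calc min (min (κ / 10) (a / 16)) (b / 4) * ‖u‖ ^ 2
      ≤ min (min (κ / 10) (a / 16)) (b / 4) * (10 * e ^ 2 + 16 * exp (u x₀) + 4 * exp (-s)) := by
        gcongr
    _ ≤ κ / 10 * (10 * e ^ 2) + a / 16 * (16 * exp (u x₀)) + b / 4 * (4 * exp (-s)) := by
        rw [mul_add, mul_add]
        gcongr
    _ ≤ _ := by
        simp only [e] at hQ ⊢
        linarith

lemma exists_energyGrad_eq_zero_of_convex (hsymm : ∀ x y, ω x y = ω y x)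
    (hω : ∀ x y, 0 ≤ ω x y) (hconn : graphConnected ω) (hμ : ∀ x, 0 < μ x)
    (hconv : ∀ x, hp x ≤ 0 ∧ 0 ≤ hm x) {x₀ x₁ : V} (hx₀ : hp x₀ < 0) (hx₁ : 0 < hm x₁) :
    ∃ u, ∀ z, energyGrad ω μ hp hm c u z = 0 := by
  classical
  obtain ⟨ε, hε, hcoer⟩ := exists_pos_mul_sq_norm_le_dirichletForm_add_exp hω hconn x₀ x₁
    (mul_pos (hμ x₀) (neg_pos.2 hx₀)) (mul_pos (hμ x₁) hx₁)
  have hlow : ∀ u : V → ℝ, ε * ‖u - 0‖ ^ 2 - (∑ x, |μ x * c|) * ‖u - 0‖ + 0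
      ≤ energy ω μ hp hm c u := fun u => by
    have hsplit : ∑ x, μ x * potential (hp x) (hm x) c (u x) = ∑ x, μ x * -hp x * exp (u x)
        + ∑ x, μ x * hm x * exp (-u x) + ∑ x, u x * (μ x * c) := by
      simp only [← sum_add_distrib, potential]
      exact sum_congr rfl fun x _ => by ring
    have h₀ : μ x₀ * -hp x₀ * exp (u x₀) ≤ ∑ x, μ x * -hp x * exp (u x) :=
      single_le_sum (fun x _ => mul_nonneg (mul_nonneg (hμ x).le (neg_nonneg.2 (hconv x).1))
        (exp_pos _).le) (mem_univ x₀)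
    have h₁ : μ x₁ * hm x₁ * exp (-u x₁) ≤ ∑ x, μ x * hm x * exp (-u x) :=
      single_le_sum (f := fun x => μ x * hm x * exp (-u x))
        (fun x _ => mul_nonneg (mul_nonneg (hμ x).le (hconv x).2) (exp_pos _).le) (mem_univ x₁)
    have h₂ := neg_mul_norm_le_sum_mul (fun x => μ x * c) u
    have h₃ := hcoer u
    rw [energy, hsplit, sub_zero]
    linarith
  obtain ⟨u, -, hmin⟩ := (continuous_energy ω μ hp hm c).continuousOn.exists_isMinOn'
    isClosed_univ (Set.mem_univ 0)
    ((tendsto_atTop_of_quadratic_le 0 hε fun u _ => hlow u).eventually_ge_atTop _)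
  exact ⟨u, fun z => energyGrad_eq_zero_of_isMinOn μ hp hm c hsymm hmin fun _ => Set.mem_univ _⟩

end Convex

section Minimax
variable {ω : V → V → ℝ} {μ hp hm : V → ℝ} {c : ℝ} {A : Set V}

lemma exists_isMinOn_slice (hsymm : ∀ x y, ω x y = ω y x) (hω : ∀ x y, 0 ≤ ω x y)
    (hconn : graphConnected ω) (hμ : ∀ x, 0 ≤ μ x) (hconv : ∀ x ∉ A, hp x ≤ 0 ∧ 0 ≤ hm x)
    {a₀ : V} (ha₀ : a₀ ∈ A) (v : V → ℝ) :
    ∃ u ∈ {u | Set.EqOn u v A}, IsMinOn (energy ω μ hp hm c) {u | Set.EqOn u v A} u := by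
  obtain ⟨κ, hκ, hP⟩ := exists_pos_mul_sq_norm_le_of_apply_eq_zero hω hconn a₀
  have hlow : ∀ u ∈ {u : V → ℝ | Set.EqOn u v A}, κ * ‖u - v‖ ^ 2
      - (∑ z, |energyGrad ω μ hp hm c v z|) * ‖u - v‖ + energy ω μ hp hm c v
        ≤ energy ω μ hp hm c u := fun u hu => by
    have hw : ∀ x ∈ A, (u - v) x = 0 := fun x hx => sub_eq_zero.2 (hu hx)
    have hQ := hP (u - v) (hw a₀ ha₀)
    have hrem : 0 ≤ ∑ x, μ x * (potential (hp x) (hm x) c (v x + (u - v) x)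
        - potential (hp x) (hm x) c (v x) - potentialDeriv (hp x) (hm x) c (v x) * (u - v) x) :=
      sum_nonneg fun x _ => mul_nonneg (hμ x) <| by
        by_cases hx : x ∈ A
        · simp [hw x hx]
        · exact potential_add_sub_sub_nonneg _ (hconv x hx).1 (hconv x hx).2 _ _
    have hlin := neg_mul_norm_le_sum_mul (energyGrad ω μ hp hm c v) (u - v)
    have hexp := energy_add μ hp hm c hsymm v (u - v)
    rw [add_sub_cancel] at hexp
    linarith
  exact (continuous_energy ω μ hp hm c).continuousOn.exists_isMinOn' (isClosed_setOf_eqOn A v)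
    (Set.eqOn_refl v A) ((tendsto_atTop_of_quadratic_le v hκ hlow).eventually_ge_atTop _)

/-- Pair the difference of the two gradients, which vanishes off `A`, with the part of `u - u'`
off `A`: the potential terms contribute nonnegatively there since `potentialDeriv` is monotone. -/
lemma dirichletForm_indicator_compl_nonpos (hsymm : ∀ x y, ω x y = ω y x) (hμ : ∀ x, 0 ≤ μ x)
    (hconv : ∀ x ∉ A, hp x ≤ 0 ∧ 0 ≤ hm x) {u u' : V → ℝ}
    (hu : ∀ z ∉ A, energyGrad ω μ hp hm c u z = 0) (hu' : ∀ z ∉ A, energyGrad ω μ hp hm c u' z = 0) :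
    dirichletForm ω (u - u') (Aᶜ.indicator (u - u')) ≤ 0 := by
  set w := Aᶜ.indicator (u - u')
  have horth : ∑ z, w z * energyGrad ω μ hp hm c u z - ∑ z, w z * energyGrad ω μ hp hm c u' z
      = 0 := by
    rw [← sum_sub_distrib]
    refine sum_eq_zero fun z _ => ?_
    by_cases hz : z ∈ A
    · simp [w, hz]
    · simp [hu z hz, hu' z hz]
  have hmono : 0 ≤ ∑ x, μ x * potentialDeriv (hp x) (hm x) c (u x) * w x
      - ∑ x, μ x * potentialDeriv (hp x) (hm x) c (u' x) * w x := by
    rw [← sum_sub_distrib]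
    refine sum_nonneg fun x _ => ?_
    by_cases hx : x ∈ A
    · simp [w, hx]
    have hmon := monotone_potentialDeriv c (hconv x hx).1 (hconv x hx).2
    have hprod : 0 ≤ (potentialDeriv (hp x) (hm x) c (u x)
        - potentialDeriv (hp x) (hm x) c (u' x)) * (u x - u' x) := by
      rcases le_total (u' x) (u x) with h | h
      · exact mul_nonneg (sub_nonneg.2 (hmon h)) (sub_nonneg.2 h)
      · exact mul_nonneg_of_nonpos_of_nonpos (sub_nonpos.2 (hmon h)) (sub_nonpos.2 h)
    have hwx : w x = u x - u' x := by simp [w, hx]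
    rw [hwx]
    nlinarith [mul_nonneg (hμ x) hprod]
  rw [sum_mul_energyGrad μ hp hm c hsymm, sum_mul_energyGrad μ hp hm c hsymm] at horth
  rw [map_sub, LinearMap.sub_apply]
  linarith

lemma exists_norm_sub_le_of_energyGrad_eq_zero (hsymm : ∀ x y, ω x y = ω y x)
    (hω : ∀ x y, 0 ≤ ω x y) (hconn : graphConnected ω) (hμ : ∀ x, 0 ≤ μ x)
    (hconv : ∀ x ∉ A, hp x ≤ 0 ∧ 0 ≤ hm x) {a₀ : V} (ha₀ : a₀ ∈ A) :
    ∃ L ≥ 0, ∀ u u' v v' : V → ℝ, Set.EqOn u v A → Set.EqOn u' v' A →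
      (∀ z ∉ A, energyGrad ω μ hp hm c u z = 0) → (∀ z ∉ A, energyGrad ω μ hp hm c u' z = 0) →
        ‖u - u'‖ ≤ L * ‖v - v'‖ := by
  obtain ⟨κ, hκ, hP⟩ := exists_pos_mul_sq_norm_le_of_apply_eq_zero hω hconn a₀
  obtain ⟨C, hC0, hC⟩ := exists_abs_dirichletForm_le ω
  refine ⟨1 + C / κ, by positivity, fun u u' v v' huv hu'v' hu hu' => ?_⟩
  set dA := A.indicator (u - u')
  set dB := Aᶜ.indicator (u - u')
  have hd : u - u' = dA + dB := (Set.indicator_self_add_compl A _).symm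
  have hdA : ‖dA‖ ≤ ‖v - v'‖ := (pi_norm_le_iff_of_nonneg (norm_nonneg _)).2 fun x => by
    by_cases hx : x ∈ A
    · simpa [dA, hx, huv hx, hu'v' hx] using norm_le_pi_norm (v - v') x
    · simp [dA, hx]
  have hdB : κ * ‖dB‖ ^ 2 ≤ dirichletForm ω dB dB := hP dB (by simp [dB, ha₀])
  have hneg : dirichletForm ω dA dB + dirichletForm ω dB dB ≤ 0 := by
    rw [← LinearMap.add_apply, ← map_add, ← hd]
    exact dirichletForm_indicator_compl_nonpos hsymm hμ hconv hu hu'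
  have hdB' : κ * ‖dB‖ ≤ C * ‖dA‖ := by
    rcases (norm_nonneg dB).eq_or_lt with h | h
    · rw [← h, mul_zero]; positivity
    · refine le_of_mul_le_mul_right ?_ h
      nlinarith [neg_abs_le (dirichletForm ω dA dB), hC dA dB]
  calc ‖u - u'‖ ≤ ‖dA‖ + ‖dB‖ := hd ▸ norm_add_le _ _
    _ ≤ ‖dA‖ + C / κ * ‖dA‖ := by
        gcongr; rw [div_mul_eq_mul_div, le_div_iff₀ hκ]; linarith
    _ ≤ (1 + C / κ) * ‖v - v'‖ := by rw [← one_add_mul]; gcongr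

lemma exists_mem_norm_eq_abs {v : V → ℝ} (hv : Set.EqOn v 0 Aᶜ) {a₀ : V} (ha₀ : a₀ ∈ A) :
    ∃ y ∈ A, ‖v‖ = |v y| := by
  classical
  obtain ⟨y, hyA, hmax⟩ := A.toFinset.exists_max_image (fun x => |v x|) ⟨a₀, by simpa using ha₀⟩
  refine ⟨y, by simpa using hyA, le_antisymm ((pi_norm_le_iff_of_nonneg (abs_nonneg _)).2
    fun x => ?_) (norm_le_pi_norm v y)⟩
  by_cases hx : x ∈ A
  · exact hmax x (by simpa using hx)
  · simp [hv hx]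

lemma exists_energy_le_of_eqOn_zero (hμ : ∀ x, 0 < μ x) (hconc : ∀ x ∈ A, 0 < hp x ∧ hm x < 0)
    {a₀ : V} (ha₀ : a₀ ∈ A) : ∃ C C₁ C₀ : ℝ, ∃ κ > 0, ∀ v ∈ {v : V → ℝ | Set.EqOn v 0 Aᶜ},
      energy ω μ hp hm c v ≤ C * ‖v‖ ^ 2 + C₁ * ‖v‖ + C₀ - κ * exp ‖v‖ := by
  classical
  obtain ⟨y₀, hy₀, hy₀min⟩ := A.toFinset.exists_min_image
    (fun x => μ x * min (hp x) (-hm x)) ⟨a₀, by simpa using ha₀⟩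
  rw [Set.mem_toFinset] at hy₀
  set κ := μ y₀ * min (hp y₀) (-hm y₀)
  have hκ : 0 < κ := mul_pos (hμ y₀) (lt_min (hconc y₀ hy₀).1 (neg_pos.2 (hconc y₀ hy₀).2))
  obtain ⟨C, -, hC⟩ := exists_abs_dirichletForm_le ω
  refine ⟨C, ∑ x, μ x * |c|, ∑ x, μ x * |potential (hp x) (hm x) c 0|, κ, hκ, fun v hv => ?_⟩
  obtain ⟨y, hyA, hy⟩ := exists_mem_norm_eq_abs hv ha₀
  have hterm : ∀ x, μ x * potential (hp x) (hm x) c (v x) ≤ μ x * |c| * ‖v‖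
      + μ x * |potential (hp x) (hm x) c 0| - if x = y then κ * exp ‖v‖ else 0 := fun x => by
    have hG₀ : 0 ≤ μ x * |potential (hp x) (hm x) c 0| := mul_nonneg (hμ x).le (abs_nonneg _)
    by_cases hx : x ∈ A
    · have hG := mul_le_mul_of_nonneg_left (potential_le c (hconc x hx).1 (hconc x hx).2 (v x))
        (hμ x).le
      have hvx₀ : |v x| ≤ ‖v‖ := norm_le_pi_norm v x
      have hvx := mul_le_mul_of_nonneg_left hvx₀ (mul_nonneg (hμ x).le (abs_nonneg c))
      have hm₀ : 0 ≤ min (hp x) (-hm x) := (lt_min (hconc x hx).1 (neg_pos.2 (hconc x hx).2)).le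
      split_ifs with hxy
      · subst hxy
        have hκx := mul_le_mul_of_nonneg_right (hy₀min x (by simpa using hx)) (exp_pos ‖v‖).le
        rw [hy] at hκx ⊢
        linarith
      · nlinarith [mul_nonneg (mul_nonneg (hμ x).le hm₀) (exp_pos |v x|).le]
    · have hxy : x ≠ y := fun h => hx (h ▸ hyA)
      have hvx : v x = 0 := hv hx
      rw [if_neg hxy, hvx]
      nlinarith [le_abs_self (potential (hp x) (hm x) c 0), (hμ x).le, abs_nonneg c,
        norm_nonneg v, mul_nonneg (mul_nonneg (hμ x).le (abs_nonneg c)) (norm_nonneg v)]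
  have hsum := sum_le_sum fun x (_ : x ∈ univ) => hterm x
  rw [sum_sub_distrib, sum_add_distrib, sum_ite_eq' univ y, if_pos (mem_univ y), ← sum_mul] at hsum
  have hQ : dirichletForm ω v v ≤ C * ‖v‖ ^ 2 := by
    nlinarith [le_abs_self (dirichletForm ω v v), hC v v]
  rw [energy]
  linarith

lemma tendsto_energy_atBot (hμ : ∀ x, 0 < μ x) (hconc : ∀ x ∈ A, 0 < hp x ∧ hm x < 0)
    {a₀ : V} (ha₀ : a₀ ∈ A) :
    Tendsto (energy ω μ hp hm c) (cocompact (V → ℝ) ⊓ 𝓟 {v | Set.EqOn v 0 Aᶜ}) atBot := by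
  obtain ⟨C, C₁, C₀, κ, hκ, hup⟩ := exists_energy_le_of_eqOn_zero (c := c) (ω := ω) hμ hconc ha₀
  exact tendsto_atBot_mono' _ (eventually_inf_principal.2 (Eventually.of_forall hup))
    (((tendsto_quadratic_sub_exp_atBot C C₁ C₀ hκ).comp tendsto_norm_cocompact_atTop).mono_left
      inf_le_left)

/-- `β a + t • w` and `β (a + t • w)` agree on `A`, and the gradient at the latter vanishes off
`A`, so the energy at the former exceeds the reduced energy at `a + t • w` by `O(t²)`. -/
lemma exists_energy_add_smul_le (hsymm : ∀ x y, ω x y = ω y x) (hμ : ∀ x, 0 ≤ μ x)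
    {β : (V → ℝ) → V → ℝ} {L : ℝ} (hL0 : 0 ≤ L) (hL : ∀ v v', ‖β v - β v'‖ ≤ L * ‖v - v'‖)
    (hβA : ∀ v, Set.EqOn (β v) v A) (hβcrit : ∀ v, ∀ z ∉ A, energyGrad ω μ hp hm c (β v) z = 0)
    {a w : V → ℝ} (hw : ‖w‖ ≤ 1)
    (hmax : ∀ t : ℝ, energy ω μ hp hm c (β (a + t • w)) ≤ energy ω μ hp hm c (β a)) :
    ∃ C, ∀ t : ℝ, (L + 1) * |t| ≤ 1 →
      energy ω μ hp hm c (β a + t • w) ≤ energy ω μ hp hm c (β a) + C * t ^ 2 := by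
  obtain ⟨C, hC0, hC⟩ := exists_energy_add_le μ hp hm c hsymm hμ (‖β a‖ + 1)
  refine ⟨C * (L + 1) ^ 2, fun t ht => ?_⟩
  set u := β (a + t • w)
  set d := β a + t • w - u
  have htw : ‖t • w‖ ≤ |t| := by
    rw [norm_smul, norm_eq_abs]; exact mul_le_of_le_one_right (abs_nonneg t) hw
  have hdiff : ‖β a - u‖ ≤ L * |t| := by
    refine (hL a _).trans (mul_le_mul_of_nonneg_left ?_ hL0)
    rwa [sub_add_cancel_left, norm_neg]
  have hd : ‖d‖ ≤ (L + 1) * |t| := by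
    calc ‖d‖ = ‖(β a - u) + t • w‖ := by simp only [d]; abel_nf
      _ ≤ L * |t| + |t| := (norm_add_le _ _).trans (add_le_add hdiff htw)
      _ = (L + 1) * |t| := by ring
  have hu : ‖u‖ ≤ ‖β a‖ + 1 := by
    have hLt : L * |t| ≤ 1 := by nlinarith [abs_nonneg t]
    linarith [norm_le_insert' u (β a), norm_sub_rev u (β a)]
  have horth : ∑ x, d x * energyGrad ω μ hp hm c u x = 0 := sum_eq_zero fun x _ => by
    by_cases hx : x ∈ A
    · simp [d, u, hβA a hx, hβA (a + t • w) hx]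
    · rw [hβcrit _ x hx, mul_zero]
  have hd2 : ‖d‖ ^ 2 ≤ (L + 1) ^ 2 * t ^ 2 := by
    rw [← sq_abs t, ← mul_pow]; exact pow_le_pow_left₀ (norm_nonneg d) hd 2
  calc energy ω μ hp hm c (β a + t • w) = energy ω μ hp hm c (u + d) := by
        rw [add_sub_cancel]
    _ ≤ energy ω μ hp hm c u + C * ‖d‖ ^ 2 := by
        simpa [horth] using hC u d hu (hd.trans ht)
    _ ≤ _ := by nlinarith [hmax t]

lemma energyGrad_eq_zero_of_forall_le [DecidableEq V] (hsymm : ∀ x y, ω x y = ω y x)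
    (hμ : ∀ x, 0 ≤ μ x) {β : (V → ℝ) → V → ℝ} {L : ℝ} (hL0 : 0 ≤ L)
    (hL : ∀ v v', ‖β v - β v'‖ ≤ L * ‖v - v'‖) (hβA : ∀ v, Set.EqOn (β v) v A)
    (hβcrit : ∀ v, ∀ z ∉ A, energyGrad ω μ hp hm c (β v) z = 0) {a : V → ℝ} {z : V}
    (hmax : ∀ t : ℝ, energy ω μ hp hm c (β (a + t • Pi.single z 1)) ≤ energy ω μ hp hm c (β a)) :
    energyGrad ω μ hp hm c (β a) z = 0 := by
  have hsingle : ‖(Pi.single z 1 : V → ℝ)‖ ≤ 1 :=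
    (pi_norm_le_iff_of_nonneg zero_le_one).2 fun x => by by_cases hx : x = z <;> simp [hx]
  obtain ⟨C, hC⟩ := exists_energy_add_smul_le hsymm hμ hL0 hL hβA hβcrit hsingle hmax
  have hnear : ∀ᶠ t in 𝓝 (0 : ℝ), (L + 1) * |t| ≤ 1 := by
    have : Continuous fun t : ℝ => (L + 1) * |t| := by fun_prop
    exact this.tendsto' 0 0 (by simp) (Iic_mem_nhds one_pos)
  have hloc : IsLocalMax
      (fun t : ℝ => energy ω μ hp hm c (β a + t • Pi.single z 1) - C * t ^ 2) 0 :=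
    hnear.mono fun t ht => by simpa using hC t ht
  simpa using hloc.hasDerivAt_eq_zero ((hasDerivAt_energy_single μ hp hm c hsymm (β a) z).sub
    ((hasDerivAt_pow 2 (0 : ℝ)).const_mul C))

theorem exists_energyGrad_eq_zero_of_mem (hsymm : ∀ x y, ω x y = ω y x)
    (hω : ∀ x y, 0 ≤ ω x y) (hconn : graphConnected ω) (hμ : ∀ x, 0 < μ x)
    (hconv : ∀ x ∉ A, hp x ≤ 0 ∧ 0 ≤ hm x) (hconc : ∀ x ∈ A, 0 < hp x ∧ hm x < 0)
    {a₀ : V} (ha₀ : a₀ ∈ A) : ∃ u, ∀ z, energyGrad ω μ hp hm c u z = 0 := by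
  classical
  choose β hβA hβmin using
    exists_isMinOn_slice (c := c) hsymm hω hconn (fun x => (hμ x).le) hconv ha₀
  have hβcrit : ∀ v, ∀ z ∉ A, energyGrad ω μ hp hm c (β v) z = 0 := fun v z hz =>
    energyGrad_eq_zero_of_isMinOn μ hp hm c hsymm (hβmin v) fun t x hx => by
      simp [hβA v hx, Pi.single_eq_of_ne (ne_of_mem_of_not_mem hx hz)]
  obtain ⟨L, hL0, hL⟩ := exists_norm_sub_le_of_energyGrad_eq_zero (c := c) hsymm hω hconn
    (fun x => (hμ x).le) hconv ha₀
  have hβL : ∀ v v', ‖β v - β v'‖ ≤ L * ‖v - v'‖ := fun v v' =>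
    hL _ _ _ _ (hβA v) (hβA v') (hβcrit v) (hβcrit v')
  have hJ : Continuous fun v => energy ω μ hp hm c (β v) :=
    (continuous_energy ω μ hp hm c).comp
      (LipschitzWith.of_dist_le' fun v v' => by simpa [dist_eq_norm] using hβL v v').continuous
  have hJtend : Tendsto (fun v => energy ω μ hp hm c (β v))
      (cocompact (V → ℝ) ⊓ 𝓟 {v | Set.EqOn v 0 Aᶜ}) atBot :=
    tendsto_atBot_mono' _ (Eventually.of_forall fun v => hβmin v (Set.eqOn_refl v A))
      (tendsto_energy_atBot hμ hconc ha₀)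
  obtain ⟨a, haX, hmax⟩ := hJ.continuousOn.exists_isMaxOn' (isClosed_setOf_eqOn Aᶜ 0)
    (Set.eqOn_refl 0 Aᶜ) (hJtend.eventually_le_atBot _)
  refine ⟨β a, fun z => ?_⟩
  by_cases hz : z ∈ A
  · refine energyGrad_eq_zero_of_forall_le hsymm (fun x => (hμ x).le) hL0 hβL hβA hβcrit
      fun t => hmax fun x hx => ?_
    simp [haX hx, Pi.single_eq_of_ne (ne_of_mem_of_not_mem hz hx).symm]
  · exact hβcrit a z hz

end Minimax

end SinhGordon

open SinhGordon

theorem stmt_2_general {V : Type*} [Fintype V]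
    (ω : V → V → ℝ) (μ : V → ℝ)
    (hsymm : ∀ x y, ω x y = ω y x)
    (hnonneg : ∀ x y, 0 ≤ ω x y)
    (hconn : graphConnected ω)
    (hμ : ∀ x, 0 < μ x)
    (hp hm : V → ℝ) (c : ℝ)
    (hp0 : hp ≠ 0) (hm0 : hm ≠ 0)
    (hset : {x : V | 0 < hp x} = {x : V | hm x < 0}) :
    ∃ u : V → ℝ,
      ∀ x, -graphLap ω μ u x = hp x * Real.exp (u x) + hm x * Real.exp (-u x) - c := by
  have hiff : ∀ x, 0 < hp x ↔ hm x < 0 := fun x => Set.ext_iff.1 hset x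
  have hconv : ∀ x ∉ {x | 0 < hp x}, hp x ≤ 0 ∧ 0 ≤ hm x := fun x hx =>
    ⟨not_lt.1 hx, not_lt.1 fun h => hx ((hiff x).2 h)⟩
  obtain ⟨u, hu⟩ : ∃ u, ∀ z, energyGrad ω μ hp hm c u z = 0 := by
    rcases Set.eq_empty_or_nonempty {x | 0 < hp x} with hA | ⟨a₀, ha₀⟩
    · have hconv' : ∀ x, hp x ≤ 0 ∧ 0 ≤ hm x := fun x => hconv x (by simp [hA])
      obtain ⟨x₀, hx₀⟩ : ∃ x, hp x < 0 := by
        by_contra! h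
        exact hp0 (funext fun x => le_antisymm (hconv' x).1 (h x))
      obtain ⟨x₁, hx₁⟩ : ∃ x, 0 < hm x := by
        by_contra! h
        exact hm0 (funext fun x => le_antisymm (h x) (hconv' x).2)
      exact exists_energyGrad_eq_zero_of_convex hsymm hnonneg hconn hμ hconv' hx₀ hx₁
    · exact exists_energyGrad_eq_zero_of_mem hsymm hnonneg hconn hμ hconv
        (fun x hx => ⟨hx, (hiff x).1 hx⟩) ha₀
  exact ⟨u, fun x => (energyGrad_eq_zero_iff μ hp hm c (hμ x).ne').1 (hu x)⟩

/-- Existence for the sinh-Gordon equation when the positivity sets coincide. -/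
theorem stmt_2 {V : Type*} [Fintype V] [Nonempty V]
    (ω : V → V → ℝ) (μ : V → ℝ)
    (hsymm : ∀ x y, ω x y = ω y x)
    (hnonneg : ∀ x y, 0 ≤ ω x y)
    (hconn : graphConnected ω)
    (hμ : ∀ x, 0 < μ x)
    (hp hm : V → ℝ) (c : ℝ)
    (hp0 : hp ≠ 0) (hm0 : hm ≠ 0)
    (hset : {x : V | 0 < hp x} = {x : V | hm x < 0}) :
    ∃ u : V → ℝ,
      ∀ x, -graphLap ω μ u x = hp x * Real.exp (u x) + hm x * Real.exp (-u x) - c :=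
  stmt_2_general ω μ hsymm hnonneg hconn hμ hp hm c hp0 hm0 hset
end

section
/- Let h₊, h₋ : V → ℝ satisfy max_{V} h₊ > 0, h₋ ≥ 0, max_{V} h₋ > 0, and ∫_V h₊ dμ < 0. Then the quantity c* := inf_{u : V → ℝ} max_{x∈V} (Δu(x) + h₊(x)e^{u(x)} + h₋(x)e^{−u(x)}) is a finite real number, i.e., −∞ < c* < +∞. -/
open Finset Real Filter

/-- Finiteness of the critical constant `c*`. -/
theorem stmt_5 {V : Type*} [Fintype V] [Nonempty V]
    (ω : V → V → ℝ) (μ : V → ℝ)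
    (hsymm : ∀ x y, ω x y = ω y x)
    (hnonneg : ∀ x y, 0 ≤ ω x y)
    (hconn : graphConnected ω)
    (hμ : ∀ x, 0 < μ x)
    (hp hm : V → ℝ)
    (hmaxp : 0 < maxV hp)
    (hmnn : ∀ x, 0 ≤ hm x)
    (hmaxm : 0 < maxV hm)
    (hint : ∑ x, hp x * μ x < 0) :
    ∃ m : ℝ, ∀ u : V → ℝ,
      m ≤ maxV (fun x => graphLap ω μ u x + hp x * Real.exp (u x) + hm x * Real.exp (-u x)) := by
  classical
  -- a vertex achieving the maximum of hp
  obtain ⟨xs, -, hxs⟩ := Finset.exists_mem_eq_sup' (Finset.univ_nonempty (α := V)) hp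
  have hH : 0 < hp xs := by
    have h1 : maxV hp = hp xs := hxs
    rw [h1] at hmaxp; exact hmaxp
  -- K = max of |hp|
  set K := Finset.univ.sup' (Finset.univ_nonempty (α := V)) (fun x => |hp x|) with hKdef
  have hK : ∀ x : V, |hp x| ≤ K := fun x => by
    rw [hKdef]; exact Finset.le_sup' (fun x => |hp x|) (Finset.mem_univ x)
  have hK0 : 0 ≤ K := (abs_nonneg (hp xs)).trans (hK xs)
  -- total weight at xs is positive
  have hW : 0 < ∑ y, ω xs y := by
    by_cases hone : ∀ y : V, y = xs
    · exfalso
      have hpos : (0:ℝ) < ∑ x, hp x * μ x :=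
        Finset.sum_pos (fun x _ => by rw [hone x]; exact mul_pos hH (hμ xs))
          ⟨xs, Finset.mem_univ xs⟩
      linarith
    · push_neg at hone
      obtain ⟨y0, hy0⟩ := hone
      obtain ⟨n, p, hp0, hpn, hstep⟩ := hconn xs y0
      have hn : n ≠ 0 := by
        rintro rfl
        exact hy0 (by rw [← hpn, hp0])
      have h1 : 0 < ω xs (p 1) := by
        have := hstep 0 (Nat.pos_of_ne_zero hn)
        rwa [hp0] at this
      calc (0:ℝ) < ω xs (p 1) := h1
        _ ≤ ∑ y, ω xs y := Finset.single_le_sum (fun y _ => hnonneg xs y) (Finset.mem_univ _)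
  have hden : 0 < hp xs * μ xs := mul_pos hH (hμ xs)
  refine ⟨-(K * ((∑ y, ω xs y) / (hp xs * μ xs))), fun u => ?_⟩
  set L := fun x => graphLap ω μ u x + hp x * Real.exp (u x) + hm x * Real.exp (-u x) with hLdef
  have hMdef : maxV L = Finset.univ.sup' (Finset.univ_nonempty (α := V)) L := rfl
  set M := maxV L with hM'
  have hLle : ∀ x : V, L x ≤ M := fun x => Finset.le_sup' L (Finset.mem_univ x)
  have hq0 : 0 ≤ K * ((∑ y, ω xs y) / (hp xs * μ xs)) :=
    mul_nonneg hK0 (div_nonneg hW.le hden.le)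
  by_cases hMneg : 0 ≤ M
  · show _ ≤ M
    linarith
  push_neg at hMneg
  -- argmin of u
  obtain ⟨x1, -, hx1⟩ := Finset.exists_mem_eq_inf' (Finset.univ_nonempty (α := V)) u
  have hmin : ∀ y : V, u x1 ≤ u y := fun y => by
    rw [← hx1]; exact Finset.inf'_le u (Finset.mem_univ y)
  -- Step A/B at xs
  have hA : graphLap ω μ u xs + hp xs * Real.exp (u xs) + hm xs * Real.exp (-u xs) ≤ M :=
    hLle xs
  set S := ∑ y, ω xs y * (1 - Real.exp (u xs - u y)) with hSdef
  have hB : (1 / μ xs) * S ≤ graphLap ω μ u xs := by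
    unfold graphLap
    apply mul_le_mul_of_nonneg_left ?_ (div_nonneg zero_le_one (hμ xs).le)
    apply Finset.sum_le_sum
    intro y _
    apply mul_le_mul_of_nonneg_left ?_ (hnonneg xs y)
    have := Real.add_one_le_exp (u xs - u y)
    linarith
  have hhmxs : 0 ≤ hm xs * Real.exp (-u xs) := mul_nonneg (hmnn xs) (Real.exp_nonneg _)
  have hC : hp xs * Real.exp (u xs) ≤ -(1 / μ xs) * S := by linarith
  -- multiply by μ xs * exp (-u xs) > 0
  have hC' : hp xs * μ xs ≤ -Real.exp (-u xs) * S := by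
    have hpos : (0:ℝ) < μ xs * Real.exp (-u xs) := mul_pos (hμ xs) (Real.exp_pos _)
    have h2 := mul_le_mul_of_nonneg_right hC hpos.le
    have he1 : Real.exp (u xs) * Real.exp (-u xs) = 1 := by
      rw [← Real.exp_add]; simp
    have he2 : (1 / μ xs) * μ xs = 1 := one_div_mul_cancel (hμ xs).ne'
    have hl : hp xs * Real.exp (u xs) * (μ xs * Real.exp (-u xs)) = hp xs * μ xs := by
      rw [show hp xs * Real.exp (u xs) * (μ xs * Real.exp (-u xs))
            = hp xs * μ xs * (Real.exp (u xs) * Real.exp (-u xs)) from by ring, he1, mul_one]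
    have hr : (-(1 / μ xs) * S) * (μ xs * Real.exp (-u xs))
        = -Real.exp (-u xs) * S * ((1 / μ xs) * μ xs) := by ring
    rw [hl, hr, he2, mul_one] at h2
    exact h2
  -- rewrite -exp(-u xs) * S as a sum
  have hD : -Real.exp (-u xs) * S = ∑ y, ω xs y * (Real.exp (-u y) - Real.exp (-u xs)) := by
    rw [hSdef, Finset.mul_sum]
    apply Finset.sum_congr rfl
    intro y _
    have hxy : Real.exp (-u xs) * Real.exp (u xs - u y) = Real.exp (-u y) := by
      rw [← Real.exp_add]; ring_nf
    linear_combination (ω xs y) * hxy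
  have hE : ∑ y, ω xs y * (Real.exp (-u y) - Real.exp (-u xs)) ≤ ∑ y, ω xs y * Real.exp (-u y) := by
    apply Finset.sum_le_sum
    intro y _
    nlinarith [hnonneg xs y, Real.exp_pos (-u xs)]
  have claim1 : hp xs * μ xs ≤ ∑ y, ω xs y * Real.exp (-u y) := by
    rw [hD] at hC'
    linarith
  -- bound the sum by exp(-u x1) * W
  have hF : ∑ y, ω xs y * Real.exp (-u y) ≤ Real.exp (-u x1) * ∑ y, ω xs y := by
    rw [Finset.mul_sum]
    apply Finset.sum_le_sum
    intro y _
    have hee : Real.exp (-u y) ≤ Real.exp (-u x1) := Real.exp_le_exp.mpr (by linarith [hmin y])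
    nlinarith [hnonneg xs y]
  have hG : (hp xs * μ xs) * Real.exp (u x1) ≤ ∑ y, ω xs y := by
    have h := mul_le_mul_of_nonneg_right (claim1.trans hF) (Real.exp_pos (u x1)).le
    have he : Real.exp (-u x1) * Real.exp (u x1) = 1 := by rw [← Real.exp_add]; simp
    have hrw : Real.exp (-u x1) * (∑ y, ω xs y) * Real.exp (u x1) = ∑ y, ω xs y := by
      rw [show Real.exp (-u x1) * (∑ y, ω xs y) * Real.exp (u x1)
            = (Real.exp (-u x1) * Real.exp (u x1)) * ∑ y, ω xs y from by ring, he, one_mul]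
    linarith [hrw ▸ h]
  have claim2 : Real.exp (u x1) ≤ (∑ y, ω xs y) / (hp xs * μ xs) :=
    (le_div_iff₀ hden).mpr (by linarith [hG])
  -- evaluate at x1
  have hlap1 : 0 ≤ graphLap ω μ u x1 := by
    unfold graphLap
    apply mul_nonneg (div_nonneg zero_le_one (hμ x1).le)
    apply Finset.sum_nonneg
    intro y _
    exact mul_nonneg (hnonneg x1 y) (by linarith [hmin y])
  have hhm1 : 0 ≤ hm x1 * Real.exp (-u x1) := mul_nonneg (hmnn x1) (Real.exp_nonneg _)
  have hph : -K ≤ hp x1 := (abs_le.mp (hK x1)).1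
  have h9 : -K * Real.exp (u x1) ≤ hp x1 * Real.exp (u x1) :=
    mul_le_mul_of_nonneg_right hph (Real.exp_pos _).le
  have h10 : K * Real.exp (u x1) ≤ K * ((∑ y, ω xs y) / (hp xs * μ xs)) :=
    mul_le_mul_of_nonneg_left claim2 hK0
  have hL1 : L x1 ≤ M := hLle x1
  have hL1' : L x1 = graphLap ω μ u x1 + hp x1 * Real.exp (u x1) + hm x1 * Real.exp (-u x1) := rfl
  show _ ≤ M
  rw [hL1'] at hL1
  linarith
end

section
/- Let h₊, h₋ : V → ℝ satisfy max_{V} h₊ > 0, h₋ ≥ 0, and max_{V} h₋ > 0, and let c ≤ 0. If the sinh-Gordon equation −Δu = h₊e^{u} + h₋e^{−u} − c has a solution u : V → ℝ, then ∫_V h₊ dμ < 0. -/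
open Finset Real Filter

/-- A necessary condition for solvability when `c ≤ 0`. -/
theorem stmt_6 {V : Type*} [Fintype V] [Nonempty V]
    (ω : V → V → ℝ) (μ : V → ℝ)
    (hsymm : ∀ x y, ω x y = ω y x)
    (hnonneg : ∀ x y, 0 ≤ ω x y)
    (hconn : graphConnected ω)
    (hμ : ∀ x, 0 < μ x)
    (hp hm : V → ℝ) (c : ℝ)
    (hmaxp : 0 < maxV hp)
    (hmnn : ∀ x, 0 ≤ hm x)
    (hmaxm : 0 < maxV hm)
    (hc : c ≤ 0)
    (u : V → ℝ)
    (hu : ∀ x, -graphLap ω μ u x = hp x * Real.exp (u x) + hm x * Real.exp (-u x) - c) :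
    ∑ x, hp x * μ x < 0 := by
  classical
  set E : V → ℝ := fun x => Real.exp (-u x) with hE
  set S : V → ℝ := fun x => ∑ y, ω x y * (u y - u x) with hS
  have hEpos : ∀ x, 0 < E x := fun x => Real.exp_pos _
  -- pointwise identity
  have hkey : ∀ x, hp x * μ x =
      (-(S x)) * E x + (c - hm x * E x) * E x * μ x := by
    intro x
    have hμx : μ x ≠ 0 := (hμ x).ne'
    have h := hu x
    rw [graphLap] at h
    have h' : -(S x) = (hp x * Real.exp (u x) + hm x * E x - c) * μ x := by
      rw [hS]
      field_simp at h
      linarith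
    have hex : Real.exp (u x) * E x = 1 := by
      rw [hE]; rw [← Real.exp_add]; simp
    linear_combination (-(E x)) * h' + (-(hp x * μ x)) * hex
  have hsum : ∑ x, hp x * μ x =
      (∑ x, (-(S x)) * E x) + ∑ x, (c - hm x * E x) * E x * μ x := by
    rw [← Finset.sum_add_distrib]
    exact Finset.sum_congr rfl fun x _ => hkey x
  -- Dirichlet term
  set A : ℝ := ∑ x, ∑ y, ω x y * (u y - u x) * E x with hA
  have hAS : ∑ x, (-(S x)) * E x = -A := by
    rw [hA, ← Finset.sum_neg_distrib]
    apply Finset.sum_congr rfl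
    intro x _
    show -S x * E x = -∑ y, ω x y * (u y - u x) * E x
    rw [hS]
    simp only [neg_mul, Finset.sum_mul]
  have hswap : A = ∑ x, ∑ y, ω x y * (u x - u y) * E y := by
    rw [hA, Finset.sum_comm]
    refine Finset.sum_congr rfl fun a _ => Finset.sum_congr rfl fun b _ => ?_
    rw [hsymm]
  have h2A : A + A = ∑ x, ∑ y, ω x y * ((u y - u x) * (E x - E y)) := by
    nth_rewrite 2 [hswap]
    rw [hA, ← Finset.sum_add_distrib]
    refine Finset.sum_congr rfl fun a _ => ?_
    rw [← Finset.sum_add_distrib]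
    exact Finset.sum_congr rfl fun b _ => by ring
  have hAnn : 0 ≤ A := by
    have : 0 ≤ A + A := by
      rw [h2A]
      apply Finset.sum_nonneg
      intro x _
      apply Finset.sum_nonneg
      intro y _
      apply mul_nonneg (hnonneg x y)
      rcases le_total (u x) (u y) with h | h
      · apply mul_nonneg (by linarith)
        have : E y ≤ E x := Real.exp_le_exp.2 (by linarith)
        linarith
      · have : E x ≤ E y := Real.exp_le_exp.2 (by linarith)
        nlinarith
    linarith
  -- the strictly negative term
  obtain ⟨x0, _, hx0⟩ := Finset.exists_mem_eq_sup' (Finset.univ_nonempty (α := V)) hm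
  have hmx0 : 0 < hm x0 := by
    have : maxV hm = hm x0 := hx0
    linarith [hmaxm, this ▸ hmaxm]
  have hT : ∑ x, (c - hm x * E x) * E x * μ x < 0 := by
    have := Finset.sum_lt_sum (s := Finset.univ)
      (f := fun x => (c - hm x * E x) * E x * μ x) (g := fun _ => (0 : ℝ))
      (fun i _ => by
        have h1 : c - hm i * E i ≤ 0 := by
          nlinarith [hmnn i, hEpos i]
        have h2 : (c - hm i * E i) * E i ≤ 0 :=
          mul_nonpos_of_nonpos_of_nonneg h1 (hEpos i).le
        exact mul_nonpos_of_nonpos_of_nonneg h2 (hμ i).le)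
      ⟨x0, Finset.mem_univ x0, by
        have h1 : c - hm x0 * E x0 < 0 := by nlinarith [hEpos x0]
        exact mul_neg_of_neg_of_pos (mul_neg_of_neg_of_pos h1 (hEpos x0)) (hμ x0)⟩
    simpa using this
  rw [hsum, hAS]
  linarith
end

section
/- Let h₊, h₋ : V → ℝ satisfy max_{V} h₊ > 0 and min_{V} h₋ < 0, and suppose there exists a vertex x₀ ∈ V with h₊(x₀) ≤ 0 and h₋(x₀) < 0. Then there exists a constant Λ₀ ∈ ℝ (depending on the graph, h₊ and h₋) such that for every Λ > Λ₀ the equation −Δu = h₊e^{u} + h₋e^{−u} − Λ has no solution u : V → ℝ. -/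
/-!
Write `M = max u`, let `A` bound the weighted degrees `∑ ω x y / μ x`, `B` bound `|hp|` and
`|hm|`, and let `ε > 0` be below `-hm` wherever `hm < 0`. At `x₀` the equation gives
`Δu(x₀) ≥ Λ + ε e^{-u(x₀)}`, while `Δu(x₀) ≤ A (M - u(x₀))`; since the exponential beats the
linear term, `Λ ≤ A M + A²/ε`, so `M` grows at least linearly in `Λ`. At a maximum point
`Δu ≤ 0`, so `Λ - B ≤ hp e^M ≤ Λ + B + A (M - min u)` there; in particular `hp > 0` there.
The oscillation `M - min u` is bounded linearly in `M` and `Λ` by walking from a minimum point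
towards `x₀`: as long as `u ≤ 0` and `hm ≥ 0` we have `Δu ≤ Λ + B`, and a single edge term of the
Laplacian then bounds the next height above the minimum by a fixed multiple of the current one
plus `O(Λ)`; at the first vertex where this fails, either `u > 0` or `hm < 0`, and in the latter
case the same exponential-versus-linear argument gives `u ≥ -(M + C)`. Altogether `e^M` is
bounded by a linear function of `M`, which bounds `M` and hence `Λ`.
-/

open Finset Real Filter

theorem mul_sub_sq_div_le_mul_exp {a ε : ℝ} (ha : 0 ≤ a) (hε : 0 < ε) (s : ℝ) :
    a * s - a ^ 2 / ε ≤ ε * exp s := by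
  have hsq : 0 ≤ a ^ 2 / ε := by positivity
  rcases le_or_gt s 0 with hs | hs
  · nlinarith [exp_pos s]
  · have hquad : a * s - a ^ 2 / ε ≤ ε * (s ^ 2 / 2) := by
      refine le_of_mul_le_mul_left ?_ hε
      have : ε * (a * s - a ^ 2 / ε) = ε * a * s - a ^ 2 := by field_simp
      nlinarith [sq_nonneg (ε * s - a)]
    nlinarith [quadratic_le_exp_of_nonneg hs.le]

theorem le_div_add_of_mul_exp_le {a b ε s : ℝ} (ha : 0 < a) (hε : 0 < ε)
    (h : ε * exp s ≤ a * s + b) : s ≤ b / a + 4 * a / ε := by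
  have h2a := mul_sub_sq_div_le_mul_exp (by positivity : 0 ≤ 2 * a) hε s
  have : a * s ≤ b + 4 * a ^ 2 / ε := by
    have : (2 * a) ^ 2 / ε = 4 * a ^ 2 / ε := by ring
    linarith
  calc s = a * s / a := by field_simp
    _ ≤ (b + 4 * a ^ 2 / ε) / a := by gcongr
    _ = b / a + 4 * a / ε := by field_simp

theorem abs_mul_exp_le {a B s : ℝ} (ha : |a| ≤ B) (hs : s ≤ 0) : |a * exp s| ≤ B := by
  rw [abs_mul, abs_of_pos (exp_pos s)]
  exact (mul_le_of_le_one_right (abs_nonneg a) (exp_le_one_iff.2 hs)).trans ha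

theorem le_one_add_pow_mul_of_le_mul_add {D : ℕ → ℝ} {a b : ℝ} {k : ℕ} (ha : 0 ≤ a) (hb : 0 ≤ b)
    (h0 : D 0 ≤ b) (hstep : ∀ i < k, D (i + 1) ≤ a * D i + b) : D k ≤ (1 + a) ^ k * b := by
  induction k with
  | zero => simpa using h0
  | succ k ih =>
    have hk := ih fun i hi => hstep i (by omega)
    have hb' : b ≤ (1 + a) ^ k * b := le_mul_of_one_le_left hb (one_le_pow₀ (by linarith))
    calc D (k + 1) ≤ a * D k + b := hstep k (by omega)
      _ ≤ a * ((1 + a) ^ k * b) + (1 + a) ^ k * b := by gcongr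
      _ = (1 + a) ^ (k + 1) * b := by ring

section Finiteness

variable {ι : Type*} [Finite ι]

theorem exists_pos_forall_le (f : ι → ℝ) : ∃ C > 0, ∀ i, f i ≤ C := by
  obtain ⟨C, hC⟩ := Finite.bddAbove_range f
  exact ⟨max C 1, by positivity, fun i => (hC ⟨i, rfl⟩).trans (le_max_left _ _)⟩

theorem exists_pos_forall_le_mul (f g : ι → ℝ) (hg : ∀ i, 0 < g i) :
    ∃ C > 0, ∀ i, f i ≤ C * g i := by
  obtain ⟨C, hC0, hC⟩ := exists_pos_forall_le fun i => f i / g i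
  exact ⟨C, hC0, fun i => (div_le_iff₀ (hg i)).1 (hC i)⟩

theorem exists_pos_forall_le_of_pos (f : ι → ℝ) : ∃ ε > 0, ∀ i, 0 < f i → ε ≤ f i := by
  obtain ⟨C, hC0, hC⟩ := exists_pos_forall_le fun i => (f i)⁻¹
  exact ⟨C⁻¹, inv_pos.2 hC0, fun i hi => inv_le_of_inv_le₀ hi (hC i)⟩

end Finiteness

theorem graphConnected.exists_path_length_le {V : Type*} [Fintype V] {ω : V → V → ℝ}
    (hconn : graphConnected ω) (y : V) :
    ∃ N : ℕ, ∀ x, ∃ n ≤ N, ∃ p : ℕ → V, p 0 = x ∧ p n = y ∧ ∀ i < n, 0 < ω (p i) (p (i + 1)) := by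
  choose n p hp using fun x => hconn x y
  exact ⟨univ.sup n, fun x => ⟨n x, le_sup (mem_univ x), p x, hp x⟩⟩

section Laplacian

variable {V : Type*} [Fintype V] {ω : V → V → ℝ} {μ : V → ℝ}

theorem mul_graphLap {x : V} (hμx : μ x ≠ 0) (u : V → ℝ) :
    μ x * graphLap ω μ u x = ∑ y, ω x y * (u y - u x) := by
  rw [graphLap, ← mul_assoc, mul_one_div_cancel hμx, one_mul]

theorem graphLap_neg (u : V → ℝ) (x : V) : graphLap ω μ (-u) x = -graphLap ω μ u x := by
  simp only [graphLap, Pi.neg_apply, ← mul_neg, ← sum_neg_distrib]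
  congr 1
  exact sum_congr rfl fun y _ => by ring

theorem graphLap_le_mul_sub {u : V → ℝ} {A M : ℝ} {x : V} (hnonneg : ∀ x y, 0 ≤ ω x y)
    (hμx : 0 < μ x) (hA : ∑ y, ω x y ≤ A * μ x) (hM : ∀ y, u y ≤ M) :
    graphLap ω μ u x ≤ A * (M - u x) := by
  refine le_of_mul_le_mul_left ?_ hμx
  rw [mul_graphLap hμx.ne']
  calc ∑ y, ω x y * (u y - u x) ≤ ∑ y, ω x y * (M - u x) :=
        sum_le_sum fun y _ => mul_le_mul_of_nonneg_left (by linarith [hM y]) (hnonneg x y)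
    _ = (∑ y, ω x y) * (M - u x) := by rw [sum_mul]
    _ ≤ A * μ x * (M - u x) := mul_le_mul_of_nonneg_right hA (by linarith [hM x])
    _ = μ x * (A * (M - u x)) := by ring

theorem neg_mul_sub_le_graphLap {u : V → ℝ} {A m : ℝ} {x : V} (hnonneg : ∀ x y, 0 ≤ ω x y)
    (hμx : 0 < μ x) (hA : ∑ y, ω x y ≤ A * μ x) (hm : ∀ y, m ≤ u y) :
    -(A * (u x - m)) ≤ graphLap ω μ u x := by
  have := graphLap_le_mul_sub (u := -u) (M := -m) hnonneg hμx hA fun y => neg_le_neg (hm y)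
  rw [graphLap_neg] at this
  simp only [Pi.neg_apply] at this
  linarith

theorem mul_sub_le_mul_graphLap_add {u : V → ℝ} {A m : ℝ} {x : V} (hnonneg : ∀ x y, 0 ≤ ω x y)
    (hμx : 0 < μ x) (hA : ∑ y, ω x y ≤ A * μ x) (hm : ∀ y, m ≤ u y) (y : V) :
    ω x y * (u y - m) ≤ μ x * (graphLap ω μ u x + A * (u x - m)) := by
  have hsum : ∑ z, ω x z * (u z - u x) = ∑ z, ω x z * (u z - m) - (∑ z, ω x z) * (u x - m) := by
    rw [sum_mul, ← sum_sub_distrib]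
    exact sum_congr rfl fun z _ => by ring
  have hy : ω x y * (u y - m) ≤ ∑ z, ω x z * (u z - m) :=
    single_le_sum (f := fun z => ω x z * (u z - m))
      (fun z _ => mul_nonneg (hnonneg x z) (sub_nonneg.2 (hm z))) (mem_univ y)
  have hdeg : (∑ z, ω x z) * (u x - m) ≤ A * μ x * (u x - m) :=
    mul_le_mul_of_nonneg_right hA (by linarith [hm x])
  rw [mul_add, mul_graphLap hμx.ne', hsum]
  linarith

theorem sub_le_of_graphLap_le_along_path {u : V → ℝ} {p : ℕ → V} {k : ℕ} {A κ μM L : ℝ}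
    (hnonneg : ∀ x y, 0 ≤ ω x y) (hμ : ∀ x, 0 < μ x) (hA : ∀ x, ∑ y, ω x y ≤ A * μ x)
    (hA0 : 0 ≤ A) (hκ : 0 < κ) (hκω : ∀ x y, 0 < ω x y → κ ≤ ω x y) (hμM : ∀ x, μ x ≤ μM)
    (hL : 0 ≤ L) (hmin : ∀ y, u (p 0) ≤ u y) (hpath : ∀ i < k, 0 < ω (p i) (p (i + 1)))
    (hlap : ∀ i < k, graphLap ω μ u (p i) ≤ L) :
    u (p k) - u (p 0) ≤ (1 + μM * A / κ) ^ k * (μM / κ * L) := by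
  have hμM0 : 0 ≤ μM := (hμ (p 0)).le.trans (hμM (p 0))
  refine le_one_add_pow_mul_of_le_mul_add (D := fun i => u (p i) - u (p 0)) (by positivity)
    (by positivity) (by simp only [sub_self]; positivity) fun i hi => ?_
  have hDi : 0 ≤ u (p i) - u (p 0) := sub_nonneg.2 (hmin _)
  have hedge := mul_sub_le_mul_graphLap_add hnonneg (hμ (p i)) (hA (p i)) hmin (p (i + 1))
  have hκedge : κ * (u (p (i + 1)) - u (p 0)) ≤ ω (p i) (p (i + 1)) * (u (p (i + 1)) - u (p 0)) :=
    mul_le_mul_of_nonneg_right (hκω _ _ (hpath i hi)) (sub_nonneg.2 (hmin _))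
  have hμedge : μ (p i) * (graphLap ω μ u (p i) + A * (u (p i) - u (p 0)))
      ≤ μM * (L + A * (u (p i) - u (p 0))) := by
    have := neg_mul_sub_le_graphLap hnonneg (hμ (p i)) (hA (p i)) hmin
    gcongr
    · linarith
    · exact hμM _
    · exact hlap i hi
  show u (p (i + 1)) - u (p 0) ≤ μM * A / κ * (u (p i) - u (p 0)) + μM / κ * L
  rw [div_mul_eq_mul_div, div_mul_eq_mul_div, ← add_div, le_div_iff₀ hκ]
  linarith

end Laplacian

section Solution

variable {V : Type*} [Fintype V] {ω : V → V → ℝ} {μ : V → ℝ} {hp hm u : V → ℝ} {Λ : ℝ}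

theorem le_mul_add_of_solution_at {A ε : ℝ} {x₀ xp : V} (hnonneg : ∀ x y, 0 ≤ ω x y)
    (hμx : 0 < μ x₀) (hA : ∑ y, ω x₀ y ≤ A * μ x₀) (hA0 : 0 ≤ A) (hε : 0 < ε)
    (hpx : hp x₀ ≤ 0) (hεx : ε ≤ -hm x₀) (hxp : ∀ y, u y ≤ u xp)
    (hu : -graphLap ω μ u x₀ = hp x₀ * exp (u x₀) + hm x₀ * exp (-u x₀) - Λ) :
    Λ ≤ A * u xp + A ^ 2 / ε := by
  have hlap := graphLap_le_mul_sub hnonneg hμx hA hxp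
  have hpe : hp x₀ * exp (u x₀) ≤ 0 := mul_nonpos_of_nonpos_of_nonneg hpx (exp_pos _).le
  have hme : ε * exp (-u x₀) ≤ -hm x₀ * exp (-u x₀) :=
    mul_le_mul_of_nonneg_right hεx (exp_pos _).le
  have := mul_sub_sq_div_le_mul_exp hA0 hε (-u x₀)
  linarith

theorem neg_le_of_solution_at {A B ε : ℝ} {x xp : V} (hnonneg : ∀ x y, 0 ≤ ω x y)
    (hμx : 0 < μ x) (hA : ∑ y, ω x y ≤ A * μ x) (hA0 : 0 < A) (hε : 0 < ε) (hB : |hp x| ≤ B)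
    (hΛ : 0 ≤ Λ) (hεx : ε ≤ -hm x) (hux : u x ≤ 0) (hxp : ∀ y, u y ≤ u xp)
    (hu : -graphLap ω μ u x = hp x * exp (u x) + hm x * exp (-u x) - Λ) :
    -u x ≤ u xp + B / A + 4 * A / ε := by
  have hlap := graphLap_le_mul_sub hnonneg hμx hA hxp
  have hpe := (abs_le.1 (abs_mul_exp_le hB hux)).2
  have hme : ε * exp (-u x) ≤ -hm x * exp (-u x) := mul_le_mul_of_nonneg_right hεx (exp_pos _).le
  have := le_div_add_of_mul_exp_le (s := -u x) (b := A * u xp + B) hA0 hε (by linarith)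
  rwa [add_div, mul_div_cancel_left₀ _ hA0.ne'] at this

theorem graphLap_le_of_solution_at {B : ℝ} {x : V} (hB : |hp x| ≤ B) (hmx : 0 ≤ hm x)
    (hux : u x ≤ 0) (hu : -graphLap ω μ u x = hp x * exp (u x) + hm x * exp (-u x) - Λ) :
    graphLap ω μ u x ≤ Λ + B := by
  have hpe := (abs_le.1 (abs_mul_exp_le hB hux)).1
  have hme : 0 ≤ hm x * exp (-u x) := mul_nonneg hmx (exp_pos _).le
  linarith

theorem mul_exp_le_of_solution_at_max {A B ε : ℝ} {xp xm : V} (hnonneg : ∀ x y, 0 ≤ ω x y)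
    (hμx : 0 < μ xp) (hA : ∑ y, ω xp y ≤ A * μ xp) (hB : |hm xp| ≤ B) (hΛ : B < Λ)
    (hε : ∀ x, 0 < hp x → ε ≤ hp x) (hxp : ∀ y, u y ≤ u xp) (hM : 0 ≤ u xp)
    (hxm : ∀ y, u xm ≤ u y)
    (hu : -graphLap ω μ u xp = hp xp * exp (u xp) + hm xp * exp (-u xp) - Λ) :
    ε * exp (u xp) ≤ Λ + B + A * (u xp - u xm) := by
  have hlap := graphLap_le_mul_sub hnonneg hμx hA hxp
  have hlap' := neg_mul_sub_le_graphLap hnonneg hμx hA hxm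
  have hme := abs_le.1 (abs_mul_exp_le hB (neg_nonpos.2 hM))
  rw [sub_self, mul_zero] at hlap
  have hpos : 0 < hp xp := pos_of_mul_pos_left (by linarith) (exp_pos (u xp)).le
  have := mul_le_mul_of_nonneg_right (hε xp hpos) (exp_pos (u xp)).le
  linarith

theorem sub_le_of_solution {A B ε κ μM : ℝ} {N : ℕ} {x₀ xp xm : V}
    (hnonneg : ∀ x y, 0 ≤ ω x y) (hμ : ∀ x, 0 < μ x) (hA : ∀ x, ∑ y, ω x y ≤ A * μ x)
    (hA0 : 0 < A) (hκ : 0 < κ) (hκω : ∀ x y, 0 < ω x y → κ ≤ ω x y) (hμM : ∀ x, μ x ≤ μM)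
    (hB : ∀ x, |hp x| ≤ B) (hε : 0 < ε) (hεm : ∀ x, 0 < -hm x → ε ≤ -hm x)
    (hΛ : 0 ≤ Λ) (hx₀ : hm x₀ < 0)
    (hpaths : ∀ x, ∃ n ≤ N, ∃ p : ℕ → V, p 0 = x ∧ p n = x₀ ∧ ∀ i < n, 0 < ω (p i) (p (i + 1)))
    (hxp : ∀ y, u y ≤ u xp) (hM : 0 ≤ u xp) (hxm : ∀ y, u xm ≤ u y)
    (hu : ∀ x, -graphLap ω μ u x = hp x * exp (u x) + hm x * exp (-u x) - Λ) :
    u xp - u xm ≤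
      2 * u xp + B / A + 4 * A / ε + (1 + μM * A / κ) ^ N * (μM / κ) * (Λ + B) := by
  classical
  have hB0 : 0 ≤ B := (abs_nonneg _).trans (hB xm)
  obtain ⟨n, hnN, p, hp0, hpn, hpath⟩ := hpaths xm
  have hexit : ∃ k, ¬(0 ≤ hm (p k) ∧ u (p k) ≤ 0) := ⟨n, fun h => by linarith [hpn ▸ h.1]⟩
  set k := Nat.find hexit
  have hkn : k ≤ n := Nat.find_min' hexit fun h => by linarith [hpn ▸ h.1]
  have hbefore : ∀ i < k, 0 ≤ hm (p i) ∧ u (p i) ≤ 0 := fun i hi =>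
    not_not.1 (Nat.find_min hexit hi)
  have hclimb : u (p k) - u xm ≤ (1 + μM * A / κ) ^ k * (μM / κ) * (Λ + B) := by
    rw [← hp0, mul_assoc]
    refine sub_le_of_graphLap_le_along_path hnonneg hμ hA hA0.le hκ hκω hμM (by positivity)
      (hp0 ▸ hxm) (fun i hi => hpath i (by omega)) fun i hi => ?_
    exact graphLap_le_of_solution_at (hB _) (hbefore i hi).1 (hbefore i hi).2 (hu _)
  have hlow : -u (p k) ≤ u xp + B / A + 4 * A / ε := by
    by_cases hpk : u (p k) ≤ 0
    · have hmk : 0 < -hm (p k) := by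
        by_contra h
        exact Nat.find_spec hexit ⟨by linarith, hpk⟩
      exact neg_le_of_solution_at hnonneg (hμ _) (hA _) hA0 hε (hB _) hΛ (hεm _ hmk) hpk hxp (hu _)
    · have : 0 ≤ B / A + 4 * A / ε := by positivity
      linarith
  have hμM0 : 0 ≤ μM := (hμ xm).le.trans (hμM xm)
  have hpow : (1 + μM * A / κ) ^ k * (μM / κ) * (Λ + B)
      ≤ (1 + μM * A / κ) ^ N * (μM / κ) * (Λ + B) := by
    gcongr
    · exact le_add_of_nonneg_right (by positivity)
    · omega
  linarith

end Solution

theorem stmt_7_general {V : Type*} [Fintype V]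
    (ω : V → V → ℝ) (μ : V → ℝ)
    (hnonneg : ∀ x y, 0 ≤ ω x y)
    (hconn : graphConnected ω)
    (hμ : ∀ x, 0 < μ x)
    (hp hm : V → ℝ)
    (hx0 : ∃ x₀ : V, hp x₀ ≤ 0 ∧ hm x₀ < 0) :
    ∃ Λ₀ : ℝ, ∀ Λ > Λ₀, ¬∃ u : V → ℝ,
      ∀ x, -graphLap ω μ u x = hp x * Real.exp (u x) + hm x * Real.exp (-u x) - Λ := by
  obtain ⟨x₀, hpx₀, hmx₀⟩ := hx0
  have : Nonempty V := ⟨x₀⟩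
  obtain ⟨A, hA0, hA⟩ := exists_pos_forall_le_mul (fun x => ∑ y, ω x y) μ hμ
  obtain ⟨B, hB0, hB⟩ := exists_pos_forall_le fun x => |hp x| + |hm x|
  obtain ⟨ε₁, hε₁, hε₁p⟩ := exists_pos_forall_le_of_pos hp
  obtain ⟨ε₂, hε₂, hε₂m⟩ := exists_pos_forall_le_of_pos fun x => -hm x
  obtain ⟨κ, hκ, hκω⟩ := exists_pos_forall_le_of_pos fun e : V × V => ω e.1 e.2
  obtain ⟨μM, hμM0, hμM⟩ := exists_pos_forall_le μ
  obtain ⟨N, hpaths⟩ := hconn.exists_path_length_le x₀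
  set R := (1 + μM * A / κ) ^ N * (μM / κ) with hR
  have hR0 : 0 ≤ R := by positivity
  set a := A * (3 + A * R)
  set b := (1 + A * R) * (A ^ 2 / ε₂ + B) + B + 4 * A ^ 2 / ε₂
  refine ⟨max (B + A ^ 2 / ε₂) (A * (b / a + 4 * a / ε₁) + A ^ 2 / ε₂), fun Λ hΛ ⟨u, hu⟩ => ?_⟩
  have hΛB : B + A ^ 2 / ε₂ < Λ := (le_max_left _ _).trans_lt hΛ
  have hΛ0 : 0 < Λ := lt_of_le_of_lt (by positivity) hΛB
  obtain ⟨xp, hxp⟩ := Finite.exists_max u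
  obtain ⟨xm, hxm⟩ := Finite.exists_min u
  have hΛM := le_mul_add_of_solution_at hnonneg (hμ x₀) (hA x₀) hA0.le hε₂ hpx₀
    (hε₂m x₀ (by linarith)) hxp (hu x₀)
  have hM : 0 ≤ u xp := by
    by_contra! h
    linarith [mul_neg_of_pos_of_neg hA0 h]
  have hosc := sub_le_of_solution hnonneg hμ hA hA0 hκ (fun x y => hκω (x, y)) hμM
    (fun x => (le_add_of_nonneg_right (abs_nonneg _)).trans (hB x)) hε₂ hε₂m hΛ0.le hmx₀
    hpaths hxp hM hxm hu
  have hmax := mul_exp_le_of_solution_at_max (A := A) hnonneg (hμ xp) (hA xp)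
    ((le_add_of_nonneg_left (abs_nonneg _)).trans (hB xp))
    (by linarith [div_nonneg (sq_nonneg A) hε₂.le]) hε₁p hxp hM hxm (hu xp)
  rw [← hR] at hosc
  have hexp : ε₁ * exp (u xp) ≤ a * u xp + b := by
    have hAB : A * (B / A) = B := mul_div_cancel₀ B hA0.ne'
    have h1 := mul_le_mul_of_nonneg_left hosc hA0.le
    have h2 := mul_le_mul_of_nonneg_left hΛM (by positivity : (0 : ℝ) ≤ 1 + A * R)
    linear_combination hmax + h1 + h2 + hAB
  have hMb := mul_le_mul_of_nonneg_left (le_div_add_of_mul_exp_le (by positivity) hε₁ hexp) hA0.le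
  linarith [(le_max_right _ _).trans_lt hΛ]

/-- Non-existence for large constants `Λ`. -/
theorem stmt_7 {V : Type*} [Fintype V] [Nonempty V]
    (ω : V → V → ℝ) (μ : V → ℝ)
    (hsymm : ∀ x y, ω x y = ω y x)
    (hnonneg : ∀ x y, 0 ≤ ω x y)
    (hconn : graphConnected ω)
    (hμ : ∀ x, 0 < μ x)
    (hp hm : V → ℝ)
    (hmaxp : 0 < maxV hp)
    (hminm : minV hm < 0)
    (hx0 : ∃ x₀ : V, hp x₀ ≤ 0 ∧ hm x₀ < 0) :
    ∃ Λ₀ : ℝ, ∀ Λ > Λ₀, ¬∃ u : V → ℝ,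
      ∀ x, -graphLap ω μ u x = hp x * Real.exp (u x) + hm x * Real.exp (-u x) - Λ :=
  stmt_7_general ω μ hnonneg hconn hμ hp hm hx0
end

section
/- Let h₊, h₋ : V → ℝ satisfy h₊ ≥ 0, max_{V} h₊ > 0, and h₋ ≥ 0. Then the equation −Δu(x) = h₊(x)e^{u(x)} + h₋(x)e^{−u(x)} for all x ∈ V has no solution u : V → ℝ. -/
open Finset Real Filter

/-- Non-existence for nonnegative prescribed functions when `c = 0`. -/
theorem stmt_8 {V : Type*} [Fintype V] [Nonempty V]
    (ω : V → V → ℝ) (μ : V → ℝ)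
    (hsymm : ∀ x y, ω x y = ω y x)
    (hnonneg : ∀ x y, 0 ≤ ω x y)
    (hconn : graphConnected ω)
    (hμ : ∀ x, 0 < μ x)
    (hp hm : V → ℝ)
    (hpnn : ∀ x, 0 ≤ hp x)
    (hmaxp : 0 < maxV hp)
    (hmnn : ∀ x, 0 ≤ hm x) :
    ¬∃ u : V → ℝ,
      ∀ x, -graphLap ω μ u x = hp x * Real.exp (u x) + hm x * Real.exp (-u x) := by
  rintro ⟨u, hu⟩
  -- the weighted sum of the Laplacian vanishes
  have hlap : ∀ x, μ x * graphLap ω μ u x = ∑ y, ω x y * (u y - u x) := by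
    intro x
    unfold graphLap
    field_simp
    rw [mul_comm, mul_div_cancel_right₀ _ (hμ x).ne']
  have key : ∑ x, μ x * graphLap ω μ u x = 0 := by
    have h1 : ∑ x, μ x * graphLap ω μ u x = ∑ x, ∑ y, ω x y * (u y - u x) :=
      Finset.sum_congr rfl fun x _ => hlap x
    have h2 : ∑ x : V, ∑ y : V, ω x y * (u y - u x)
        = - ∑ x : V, ∑ y : V, ω x y * (u y - u x) := by
      conv_lhs => rw [Finset.sum_comm]
      rw [← Finset.sum_neg_distrib]
      refine Finset.sum_congr rfl fun y _ => ?_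
      rw [← Finset.sum_neg_distrib]
      refine Finset.sum_congr rfl fun x _ => ?_
      rw [hsymm y x]; ring
    rw [h1]; linarith
  -- find a vertex where hp is positive
  obtain ⟨x0, -, hx0⟩ : ∃ x0 ∈ Finset.univ, 0 < hp x0 := by
    have := hmaxp
    unfold maxV at this
    rwa [Finset.lt_sup'_iff] at this
  -- the RHS sum is positive
  have hsum : 0 < ∑ x, μ x * (hp x * Real.exp (u x) + hm x * Real.exp (-u x)) := by
    refine Finset.sum_pos' (fun x _ => ?_) ⟨x0, Finset.mem_univ x0, ?_⟩
    · have h0 := (hμ x).le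
      have h1 : 0 ≤ hp x * Real.exp (u x) := mul_nonneg (hpnn x) (Real.exp_pos _).le
      have h2 : 0 ≤ hm x * Real.exp (-u x) := mul_nonneg (hmnn x) (Real.exp_pos _).le
      nlinarith
    · have h1 : 0 < hp x0 * Real.exp (u x0) := mul_pos hx0 (Real.exp_pos _)
      have h2 : 0 ≤ hm x0 * Real.exp (-u x0) :=
        mul_nonneg (hmnn x0) (Real.exp_pos _).le
      have := hμ x0
      nlinarith
  have heq : ∑ x, μ x * (hp x * Real.exp (u x) + hm x * Real.exp (-u x))
      = - ∑ x, μ x * graphLap ω μ u x := by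
    rw [← Finset.sum_neg_distrib]
    refine Finset.sum_congr rfl fun x _ => ?_
    rw [← hu x]; ring
  rw [heq, key] at hsum
  norm_num at hsum
end

section
/- The equation −Δu(x) = −2·sinh(u(x)) for all x ∈ V (equivalently −Δu = −e^{u} + e^{−u}) has exactly one solution u : V → ℝ, namely the constant function u ≡ 0. -/
open Finset Real Filter

/-- The equation `−Δu = −2 sinh u` has exactly one solution, the zero function. -/
theorem stmt_9 {V : Type*} [Fintype V] [Nonempty V]
    (ω : V → V → ℝ) (μ : V → ℝ)
    (hsymm : ∀ x y, ω x y = ω y x)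
    (hnonneg : ∀ x y, 0 ≤ ω x y)
    (hconn : graphConnected ω)
    (hμ : ∀ x, 0 < μ x) :
    ∀ u : V → ℝ,
      (∀ x, -graphLap ω μ u x = -2 * Real.sinh (u x)) ↔ u = fun _ => 0 := by
  intro u
  constructor
  · intro heq
    -- at any point, Δu x = 2 sinh (u x)
    have key : ∀ x, graphLap ω μ u x = 2 * Real.sinh (u x) := by
      intro x; have := heq x; linarith
    -- maximum point
    obtain ⟨a, -, ha⟩ := Finset.exists_max_image (Finset.univ : Finset V) u
      Finset.univ_nonempty
    obtain ⟨b, -, hb⟩ := Finset.exists_min_image (Finset.univ : Finset V) u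
      Finset.univ_nonempty
    have hsa : Real.sinh (u a) ≤ 0 := by
      have hsum : ∑ y, ω a y * (u y - u a) ≤ 0 := by
        apply Finset.sum_nonpos
        intro y _
        exact mul_nonpos_of_nonneg_of_nonpos (hnonneg a y)
          (by have := ha y (Finset.mem_univ y); linarith)
      have hpos : 0 < 1 / μ a := div_pos one_pos (hμ _)
      have : graphLap ω μ u a ≤ 0 := by
        unfold graphLap
        exact mul_nonpos_of_nonneg_of_nonpos hpos.le hsum
      rw [key a] at this; linarith
    have hsb : 0 ≤ Real.sinh (u b) := by
      have hsum : 0 ≤ ∑ y, ω b y * (u y - u b) := by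
        apply Finset.sum_nonneg
        intro y _
        exact mul_nonneg (hnonneg b y)
          (by have := hb y (Finset.mem_univ y); linarith)
      have hpos : 0 < 1 / μ b := div_pos one_pos (hμ _)
      have : 0 ≤ graphLap ω μ u b := by
        unfold graphLap
        exact mul_nonneg hpos.le hsum
      rw [key b] at this; linarith
    have hua : u a ≤ 0 := by
      have := Real.sinh_le_sinh.mp (by simpa using hsa)
      simpa using this
    have hub : 0 ≤ u b := by
      have := Real.sinh_le_sinh.mp (by simpa using hsb)
      simpa using this
    funext x
    have h1 := ha x (Finset.mem_univ x)
    have h2 := hb x (Finset.mem_univ x)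
    show u x = 0
    linarith
  · intro h x
    subst h
    simp [graphLap]
end

section
/- Refined elliptic estimate: assume V has at least two vertices, and set A = max over all adjacent pairs y ∼ x of (Σ_{z ∼ x} ω_{zx})/ω_{yx} and B = max over all adjacent pairs y ∼ x of μ_x/ω_{yx}. Then for every u : V → ℝ, max_{V} u − min_{V} u ≤ (1 + A + A² + ⋯ + A^{#V−2}) · B · max_{x∈V} Δu(x), where #V is the number of vertices of V. -/
open Finset Real Filter

/-- Reachability from `x0` by a path of length at most `k`. -/
def reach {V : Type*} (ω : V → V → ℝ) (x0 : V) (k : ℕ) (z : V) : Prop :=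
  ∃ n ≤ k, ∃ p : ℕ → V, p 0 = x0 ∧ p n = z ∧ ∀ i < n, 0 < ω (p i) (p (i + 1))

lemma reach_self {V : Type*} (ω : V → V → ℝ) (x0 : V) (k : ℕ) : reach ω x0 k x0 :=
  ⟨0, Nat.zero_le _, fun _ => x0, rfl, rfl, fun i hi => absurd hi (Nat.not_lt_zero i)⟩

lemma reach_mono {V : Type*} {ω : V → V → ℝ} {x0 z : V} {k k' : ℕ} (h : k ≤ k')
    (hr : reach ω x0 k z) : reach ω x0 k' z := by
  obtain ⟨n, hn, p, h0, hn', he⟩ := hr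
  exact ⟨n, hn.trans h, p, h0, hn', he⟩

lemma reach_step {V : Type*} {ω : V → V → ℝ} {x0 y z : V} {k : ℕ}
    (hr : reach ω x0 k y) (he : 0 < ω y z) : reach ω x0 (k + 1) z := by
  obtain ⟨n, hn, p, h0, hn', hed⟩ := hr
  refine ⟨n + 1, by omega, fun i => if i ≤ n then p i else z, by simp [h0], by simp, ?_⟩
  intro i hi
  rcases Nat.lt_or_ge i n with h | h
  · have h1 : i ≤ n := h.le
    have h2 : i + 1 ≤ n := h
    simp only [h1, h2, if_pos]
    exact hed i h
  · have hi' : i = n := by omega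
    subst hi'
    simp only [le_refl, if_pos, Nat.not_succ_le_self, if_neg, hn']
    simpa [hn'] using he

lemma reach_all {V : Type*} [Fintype V] [Nonempty V] (ω : V → V → ℝ) (hconn : graphConnected ω)
    (x0 : V) (z : V) : reach ω x0 (Fintype.card V - 1) z := by
  classical
  -- if reach is closed at level k, then every vertex is reached within k steps
  have hclosed : ∀ k : ℕ, (∀ w, reach ω x0 (k + 1) w → reach ω x0 k w) →
      ∀ w, reach ω x0 k w := by
    intro k hcl w
    obtain ⟨n, p, h0, hn, he⟩ := hconn x0 w
    have key : ∀ i, i ≤ n → reach ω x0 k (p i) := by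
      intro i
      induction i with
      | zero => intro _; rw [h0]; exact reach_self ω x0 k
      | succ i ih =>
        intro hi
        have h1 : i < n := by omega
        exact hcl _ (reach_step (ih h1.le) (he i h1))
    have := key n le_rfl
    rwa [hn] at this
  -- claim: for all k, either everything is reached, or N k has at least k+1 elements
  have claim : ∀ k : ℕ, (∀ w, reach ω x0 k w) ∨
      k + 1 ≤ (Finset.univ.filter (fun w => reach ω x0 k w)).card := by
    intro k
    induction k with
    | zero =>
      right
      have hx : x0 ∈ Finset.univ.filter (fun w => reach ω x0 0 w) := by
        simp [reach_self]
      exact Finset.card_pos.mpr ⟨x0, hx⟩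
    | succ k ih =>
      rcases ih with hall | hcard
      · exact Or.inl fun w => reach_mono (Nat.le_succ k) (hall w)
      · by_cases hcl : ∀ w, reach ω x0 (k + 1) w → reach ω x0 k w
        · exact Or.inl fun w => reach_mono (Nat.le_succ k) (hclosed k hcl w)
        · right
          push_neg at hcl
          obtain ⟨w, hw1, hw2⟩ := hcl
          have hsub : Finset.univ.filter (fun v => reach ω x0 k v) ⊂
              Finset.univ.filter (fun v => reach ω x0 (k + 1) v) := by
            constructor
            · intro v hv
              simp only [Finset.mem_filter, Finset.mem_univ, true_and] at hv ⊢
              exact reach_mono (Nat.le_succ k) hv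
            · intro hsub'
              have := hsub' (by simp [hw1] : w ∈ _)
              simp only [Finset.mem_filter, Finset.mem_univ, true_and] at this
              exact hw2 this
          have := Finset.card_lt_card hsub
          omega
  rcases claim (Fintype.card V - 1) with hall | hcard
  · exact hall z
  · have hle : (Finset.univ.filter (fun w => reach ω x0 (Fintype.card V - 1) w)).card ≤
        Fintype.card V := by
      simpa using Finset.card_filter_le Finset.univ (fun w => reach ω x0 (Fintype.card V - 1) w)
    have hpos : 1 ≤ Fintype.card V := Fintype.card_pos
    have heq : (Finset.univ.filter (fun w => reach ω x0 (Fintype.card V - 1) w)).card =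
        Fintype.card V := by omega
    have : Finset.univ.filter (fun w => reach ω x0 (Fintype.card V - 1) w) = Finset.univ := by
      apply Finset.eq_univ_of_card
      simpa using heq
    have hz : z ∈ Finset.univ.filter (fun w => reach ω x0 (Fintype.card V - 1) w) := by
      rw [this]; exact Finset.mem_univ z
    simpa using hz

/-- Refined elliptic estimate on graphs. -/
theorem stmt_14 {V : Type*} [Fintype V] [Nonempty V]
    (ω : V → V → ℝ) (μ : V → ℝ)
    (hsymm : ∀ x y, ω x y = ω y x)
    (hnonneg : ∀ x y, 0 ≤ ω x y)
    (hconn : graphConnected ω)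
    (hμ : ∀ x, 0 < μ x)
    (hcard : 2 ≤ Fintype.card V)
    (A B : ℝ)
    (hA : A = sSup {a : ℝ | ∃ x y : V, 0 < ω y x ∧ a = (∑ z, ω z x) / ω y x})
    (hB : B = sSup {b : ℝ | ∃ x y : V, 0 < ω y x ∧ b = μ x / ω y x})
    (u : V → ℝ) :
    maxV u - minV u ≤
      (∑ i ∈ Finset.range (Fintype.card V - 1), A ^ i) * B *
        maxV (fun x => graphLap ω μ u x) := by
  classical
  obtain ⟨x0, -, hx0⟩ := Finset.exists_mem_eq_inf' (Finset.univ_nonempty (α := V)) u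
  obtain ⟨x1, -, hx1⟩ := Finset.exists_mem_eq_sup' (Finset.univ_nonempty (α := V)) u
  set M : ℝ := maxV (fun x => graphLap ω μ u x) with hM
  have humin : ∀ z, u x0 ≤ u z := fun z => hx0 ▸ Finset.inf'_le u (Finset.mem_univ z)
  have hLapM : ∀ x, graphLap ω μ u x ≤ M := fun x =>
    Finset.le_sup' (fun x => graphLap ω μ u x) (Finset.mem_univ x)
  -- M ≥ 0 : the Laplacian at the min point is nonneg
  have hM0 : 0 ≤ M := by
    refine le_trans ?_ (hLapM x0)
    unfold graphLap
    apply mul_nonneg (one_div_nonneg.mpr (hμ x0).le)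
    apply Finset.sum_nonneg
    intro z _
    exact mul_nonneg (hnonneg x0 z) (sub_nonneg.mpr (humin z))
  -- existence of an edge
  obtain ⟨a, b, hab⟩ := Fintype.exists_pair_of_one_lt_card (α := V) (by omega)
  have hedge : ∃ x y : V, 0 < ω y x := by
    obtain ⟨n, p, h0, hn, he⟩ := hconn a b
    have hn1 : 0 < n := by
      rcases Nat.eq_zero_or_pos n with h | h
      · exfalso; apply hab; rw [← h0, ← hn, h]
      · exact h
    exact ⟨p 1, p 0, he 0 hn1⟩
  -- finiteness and boundedness of the sSup sets
  have hSAfin : Set.Finite {a : ℝ | ∃ x y : V, 0 < ω y x ∧ a = (∑ z, ω z x) / ω y x} := by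
    apply Set.Finite.subset (Set.finite_range (fun p : V × V => (∑ z, ω z p.1) / ω p.2 p.1))
    rintro r ⟨x, y, -, rfl⟩
    exact ⟨(x, y), rfl⟩
  have hSBfin : Set.Finite {b : ℝ | ∃ x y : V, 0 < ω y x ∧ b = μ x / ω y x} := by
    apply Set.Finite.subset (Set.finite_range (fun p : V × V => μ p.1 / ω p.2 p.1))
    rintro r ⟨x, y, -, rfl⟩
    exact ⟨(x, y), rfl⟩
  have hAge : ∀ x y : V, 0 < ω y x → (∑ z, ω z x) / ω y x ≤ A := by
    intro x y h
    rw [hA]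
    exact le_csSup hSAfin.bddAbove ⟨x, y, h, rfl⟩
  have hBge : ∀ x y : V, 0 < ω y x → μ x / ω y x ≤ B := by
    intro x y h
    rw [hB]
    exact le_csSup hSBfin.bddAbove ⟨x, y, h, rfl⟩
  have hA1 : 1 ≤ A := by
    obtain ⟨x, y, h⟩ := hedge
    refine le_trans ?_ (hAge x y h)
    rw [le_div_iff₀ h, one_mul]
    exact Finset.single_le_sum (fun z _ => hnonneg z x) (Finset.mem_univ y)
  have hA0 : 0 ≤ A := le_trans zero_le_one hA1
  have hB0 : 0 ≤ B := by
    obtain ⟨x, y, h⟩ := hedge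
    exact le_trans (div_nonneg (hμ x).le h.le) (hBge x y h)
  -- step estimate along an edge
  have hstep : ∀ x y : V, 0 < ω x y →
      u y - u x0 ≤ A * (u x - u x0) + B * M := by
    intro x y hxy
    have hyx : 0 < ω y x := by rw [← hsymm]; exact hxy
    set w : ℝ := ω x y with hw
    -- key sum identity
    have hLap : μ x * graphLap ω μ u x = ∑ z, ω x z * (u z - u x) := by
      unfold graphLap
      rw [← mul_assoc, mul_one_div, div_self (hμ x).ne', one_mul]
    have hkey : w * (u y - u x0) ≤ μ x * graphLap ω μ u x + (∑ z, ω x z) * (u x - u x0) := by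
      have h1 : w * (u y - u x0) ≤ ∑ z, ω x z * (u z - u x0) :=
        Finset.single_le_sum (f := fun z => ω x z * (u z - u x0))
          (fun z _ => mul_nonneg (hnonneg x z) (sub_nonneg.mpr (humin z)))
          (Finset.mem_univ y)
      have h2 : (∑ z, ω x z * (u z - u x0)) =
          (∑ z, ω x z * (u z - u x)) + (∑ z, ω x z) * (u x - u x0) := by
        rw [Finset.sum_mul, ← Finset.sum_add_distrib]
        congr 1; ext z; ring
      rw [hLap]; rw [h2] at h1; exact h1
    -- bound the two terms
    have hbound1 : μ x * graphLap ω μ u x ≤ w * (B * M) := by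
      have hμB : μ x ≤ w * B := by
        have := hBge x y hyx
        rw [div_le_iff₀ hyx] at this
        calc μ x ≤ B * ω y x := this
        _ = w * B := by rw [hw, hsymm x y]; ring
      calc μ x * graphLap ω μ u x ≤ μ x * M :=
            mul_le_mul_of_nonneg_left (hLapM x) (hμ x).le
        _ ≤ (w * B) * M := mul_le_mul_of_nonneg_right hμB hM0
        _ = w * (B * M) := by ring
    have hbound2 : (∑ z, ω x z) * (u x - u x0) ≤ w * (A * (u x - u x0)) := by
      have hsA : (∑ z, ω x z) ≤ w * A := by
        have := hAge x y hyx
        rw [div_le_iff₀ hyx] at this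
        have hsum : (∑ z, ω z x) = ∑ z, ω x z := by
          apply Finset.sum_congr rfl; intro z _; exact hsymm z x
        calc (∑ z, ω x z) = ∑ z, ω z x := hsum.symm
          _ ≤ A * ω y x := this
          _ = w * A := by rw [hw, hsymm x y]; ring
      calc (∑ z, ω x z) * (u x - u x0) ≤ (w * A) * (u x - u x0) :=
            mul_le_mul_of_nonneg_right hsA (sub_nonneg.mpr (humin x))
        _ = w * (A * (u x - u x0)) := by ring
    have : w * (u y - u x0) ≤ w * (A * (u x - u x0) + B * M) := by
      calc w * (u y - u x0) ≤ μ x * graphLap ω μ u x + (∑ z, ω x z) * (u x - u x0) := hkey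
        _ ≤ w * (B * M) + w * (A * (u x - u x0)) := add_le_add hbound1 hbound2
        _ = w * (A * (u x - u x0) + B * M) := by ring
    exact le_of_mul_le_mul_left this hxy
  -- main estimate along reachability
  have hmain : ∀ k : ℕ, ∀ z : V, reach ω x0 k z →
      u z - u x0 ≤ (∑ i ∈ Finset.range k, A ^ i) * B * M := by
    intro k
    induction k with
    | zero =>
      intro z hz
      obtain ⟨n, hn, p, h0, hn', -⟩ := hz
      have hn0 : n = 0 := Nat.le_zero.mp hn
      subst hn0
      rw [← hn', h0]
      simp
    | succ k ih =>
      intro z hz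
      have hgmono : (∑ i ∈ Finset.range k, A ^ i) * B * M ≤
          (∑ i ∈ Finset.range (k + 1), A ^ i) * B * M := by
        apply mul_le_mul_of_nonneg_right _ hM0
        apply mul_le_mul_of_nonneg_right _ hB0
        apply Finset.sum_le_sum_of_subset_of_nonneg
        · exact Finset.range_subset_range.mpr (Nat.le_succ k)
        · intro i _ _; exact pow_nonneg hA0 i
      obtain ⟨n, hn, p, h0, hn', he⟩ := hz
      rcases Nat.lt_or_ge n (k + 1) with h | h
      · exact le_trans (ih z ⟨n, by omega, p, h0, hn', he⟩) hgmono
      · have hnk : n = k + 1 := by omega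
        subst hnk
        have hry : reach ω x0 k (p k) := ⟨k, le_rfl, p, h0, rfl, fun i hi => he i (by omega)⟩
        have hedge' : 0 < ω (p k) z := by
          have := he k (by omega)
          rwa [hn'] at this
        have h1 := hstep (p k) z hedge'
        have h2 := ih (p k) hry
        have h3 : A * (u (p k) - u x0) ≤ A * ((∑ i ∈ Finset.range k, A ^ i) * B * M) :=
          mul_le_mul_of_nonneg_left h2 hA0
        calc u z - u x0 ≤ A * (u (p k) - u x0) + B * M := h1
          _ ≤ A * ((∑ i ∈ Finset.range k, A ^ i) * B * M) + B * M := by linarith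
          _ = (∑ i ∈ Finset.range (k + 1), A ^ i) * B * M := by
              rw [geom_sum_succ]
              ring
  have hx1reach := reach_all ω hconn x0 x1
  have := hmain (Fintype.card V - 1) x1 hx1reach
  have hfin : maxV u - minV u = u x1 - u x0 := by
    rw [maxV, minV, hx0, hx1]
  rw [hfin]
  exact this
end

section
/- Sub-super solution principle: let f : V × ℝ → ℝ be continuous in the second variable, set F(x,t) = ∫₀^t f(x,s) ds, and define the functional J_f(u) = ∫_V ( ½|∇u|² − F(·,u) ) dμ for u : V → ℝ. Suppose φ, ψ : V → ℝ satisfy φ ≤ ψ, −Δφ(x) ≤ f(x, φ(x)) for all x (φ is a subsolution) and −Δψ(x) ≥ f(x, ψ(x)) for all x (ψ is a supersolution). Then any minimizer u of J_f over the set {u : V → ℝ : φ ≤ u ≤ ψ} satisfies −Δu(x) = f(x, u(x)) for all x ∈ V. -/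
open Finset Real Filter

/-- The energy functional `J_f` associated with the equation `−Δu = f(·,u)`. -/
noncomputable def Jfun {V : Type*} [Fintype V] (ω : V → V → ℝ) (μ : V → ℝ)
    (f : V → ℝ → ℝ) (w : V → ℝ) : ℝ :=
  ∑ x, ((1 / 2) * ((1 / (2 * μ x)) * ∑ y, ω x y * (w y - w x) ^ 2)
    - ∫ s in (0 : ℝ)..(w x), f x s) * μ x

/-! Perturb the minimizer at one vertex: by the discrete Green formula, `t ↦ J_f (u + t δ_x)` has
derivative `μ_x (−Δu(x) − f(x, u(x)))` at `0`. Where `u(x) < ψ(x)` the perturbations with small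
`t > 0` stay between `φ` and `ψ`, so this derivative is nonnegative; where `u(x) = ψ(x)` the
function `u ≤ ψ` touches `ψ` from below at `x`, so `Δu(x) ≤ Δψ(x)` and the supersolution
inequality gives the same bound. The reverse inequality follows in the same way from `φ`. -/

open Topology

lemma IsMinOn.hasLineDerivAt_nonneg {E : Type*} [AddCommGroup E] [Module ℝ E] {J : E → ℝ}
    {s : Set E} {u v : E} {d : ℝ} (hmin : IsMinOn J s u) (hd : HasLineDerivAt ℝ J d u v)
    (hv : ∀ᶠ t in 𝓝[>] (0 : ℝ), u + t • v ∈ s) : 0 ≤ d := by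
  refine ge_of_tendsto hd.tendsto_slope_zero_right ?_
  filter_upwards [hv, self_mem_nhdsWithin] with t ht (htpos : 0 < t)
  exact smul_nonneg (inv_nonneg.2 htpos.le) (sub_nonneg.2 (hmin ht))

lemma add_smul_single_mem_Icc {ι : Type*} [DecidableEq ι] {φ ψ u : ι → ℝ}
    (hu : u ∈ Set.Icc φ ψ) {x : ι} {c t : ℝ} (ht : u x + t * c ∈ Set.Icc (φ x) (ψ x)) :
    u + t • Pi.single x c ∈ Set.Icc φ ψ := by
  constructor <;> intro y <;> rcases eq_or_ne y x with rfl | hy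
  all_goals simp_all [hu.1 y, hu.2 y]

section WeightedGraph

variable {V : Type*} [Fintype V] {ω : V → V → ℝ} {μ : V → ℝ} {f : V → ℝ → ℝ}

lemma graphLap_le_graphLap_of_le_of_eq {u w : V → ℝ} {x : V} (hω : ∀ y, 0 ≤ ω x y)
    (hμ : 0 ≤ μ x) (hle : u ≤ w) (hx : u x = w x) :
    graphLap ω μ u x ≤ graphLap ω μ w x := by
  unfold graphLap
  gcongr with y
  exacts [hω y, hle y, hx.ge]

lemma sum_mul_graphLap_mul (hsymm : ∀ x y, ω x y = ω y x) (hμ : ∀ x, μ x ≠ 0)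
    (u v : V → ℝ) :
    ∑ x, μ x * graphLap ω μ u x * v x =
      -(1 / 2) * ∑ x, ∑ y, ω x y * (u y - u x) * (v y - v x) := by
  have hlap : ∀ x, μ x * graphLap ω μ u x * v x = ∑ y, ω x y * (u y - u x) * v x := by
    intro x
    rw [graphLap, ← mul_assoc, mul_one_div_cancel (hμ x), one_mul, Finset.sum_mul]
  have hsplit : ∑ x, ∑ y, ω x y * (u y - u x) * (v y - v x) =
      ∑ x, ∑ y, ω x y * (u y - u x) * v y - ∑ x, ∑ y, ω x y * (u y - u x) * v x := by
    simp only [← Finset.sum_sub_distrib, mul_sub]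
  have hswap : ∑ x, ∑ y, ω x y * (u y - u x) * v y =
      -∑ x, ∑ y, ω x y * (u y - u x) * v x := by
    rw [Finset.sum_comm, ← Finset.sum_neg_distrib]
    refine Finset.sum_congr rfl fun x _ => ?_
    rw [← Finset.sum_neg_distrib]
    exact Finset.sum_congr rfl fun y _ => by rw [hsymm]; ring
  simp only [hlap, hsplit, hswap]
  ring

lemma Jfun_eq (hμ : ∀ x, μ x ≠ 0) (w : V → ℝ) :
    Jfun ω μ f w = (1 / 4) * ∑ x, ∑ y, ω x y * (w y - w x) ^ 2
      - ∑ x, μ x * ∫ s in (0 : ℝ)..(w x), f x s := by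
  rw [Jfun, Finset.mul_sum, ← Finset.sum_sub_distrib]
  refine Finset.sum_congr rfl fun x _ => ?_
  field_simp [hμ x]
  ring

lemma hasLineDerivAt_Jfun (hsymm : ∀ x y, ω x y = ω y x) (hμ : ∀ x, μ x ≠ 0)
    (hf : ∀ x, Continuous (f x)) (u v : V → ℝ) :
    HasLineDerivAt ℝ (Jfun ω μ f) (∑ x, μ x * (-graphLap ω μ u x - f x (u x)) * v x) u v := by
  have hline : ∀ x, HasDerivAt (fun t : ℝ => (u + t • v) x) (v x) 0 := fun x => by
    simpa using ((hasDerivAt_id (0 : ℝ)).mul_const (v x)).const_add (u x)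
  have henergy : HasDerivAt
      (fun t : ℝ => (1 / 4) * ∑ x, ∑ y, ω x y * ((u + t • v) y - (u + t • v) x) ^ 2)
      ((1 / 4) * ∑ x, ∑ y, ω x y * (2 * (u y - u x) * (v y - v x))) 0 := by
    refine .const_mul _ (.fun_sum fun x _ => .fun_sum fun y _ => .const_mul _ ?_)
    simpa using ((hline y).fun_sub (hline x)).fun_pow 2
  have hpotential : HasDerivAt (fun t : ℝ => ∑ x, μ x * ∫ s in (0 : ℝ)..(u + t • v) x, f x s)
      (∑ x, μ x * (f x (u x) * v x)) 0 := by
    refine .fun_sum fun x _ => .const_mul _ ?_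
    have hF := ((hf x).integral_hasStrictDerivAt 0 (u x)).hasDerivAt
    exact hF.comp_of_eq 0 (hline x) (by simp)
  unfold HasLineDerivAt
  simp only [Jfun_eq hμ]
  convert henergy.fun_sub hpotential using 1
  have hsplit : ∑ x, μ x * (-graphLap ω μ u x - f x (u x)) * v x =
      -∑ x, μ x * graphLap ω μ u x * v x - ∑ x, μ x * (f x (u x) * v x) := by
    rw [← Finset.sum_neg_distrib, ← Finset.sum_sub_distrib]
    exact Finset.sum_congr rfl fun x _ => by ring
  rw [hsplit, sum_mul_graphLap_mul hsymm hμ, neg_mul, neg_neg, Finset.mul_sum, Finset.mul_sum]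
  congr 1
  refine Finset.sum_congr rfl fun x _ => ?_
  rw [Finset.mul_sum, Finset.mul_sum]
  exact Finset.sum_congr rfl fun y _ => by ring

lemma hasLineDerivAt_Jfun_single [DecidableEq V] (hsymm : ∀ x y, ω x y = ω y x)
    (hμ : ∀ x, μ x ≠ 0) (hf : ∀ x, Continuous (f x)) (u : V → ℝ) (x : V) (c : ℝ) :
    HasLineDerivAt ℝ (Jfun ω μ f) (μ x * (-graphLap ω μ u x - f x (u x)) * c) u
      (Pi.single x c) := by
  simpa [Pi.single_apply] using hasLineDerivAt_Jfun hsymm hμ hf u (Pi.single x c)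

lemma le_neg_graphLap_of_isMinOn {φ ψ u : V → ℝ} {x : V} (hω : ∀ x y, 0 ≤ ω x y)
    (hsymm : ∀ x y, ω x y = ω y x) (hμ : ∀ x, 0 < μ x) (hf : ∀ x, Continuous (f x))
    (hsup : f x (ψ x) ≤ -graphLap ω μ ψ x) (hu : u ∈ Set.Icc φ ψ)
    (hmin : IsMinOn (Jfun ω μ f) (Set.Icc φ ψ) u) :
    f x (u x) ≤ -graphLap ω μ u x := by
  classical
  rcases (hu.2 x).eq_or_lt with hx | hx
  · calc f x (u x) = f x (ψ x) := by rw [hx]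
      _ ≤ -graphLap ω μ ψ x := hsup
      _ ≤ -graphLap ω μ u x :=
        neg_le_neg (graphLap_le_graphLap_of_le_of_eq (hω x) (hμ x).le hu.2 hx)
  · have hright : ∀ᶠ t in 𝓝[>] (0 : ℝ), u + t • Pi.single x 1 ∈ Set.Icc φ ψ := by
      filter_upwards [Ioo_mem_nhdsGT (sub_pos.2 hx)] with t ht
      exact add_smul_single_mem_Icc hu ⟨by linarith [hu.1 x, ht.1], by linarith [ht.2]⟩
    have hd := hmin.hasLineDerivAt_nonneg
      (hasLineDerivAt_Jfun_single hsymm (fun y => (hμ y).ne') hf u x 1) hright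
    rw [mul_one] at hd
    linarith [nonneg_of_mul_nonneg_right hd (hμ x)]

lemma neg_graphLap_le_of_isMinOn {φ ψ u : V → ℝ} {x : V} (hω : ∀ x y, 0 ≤ ω x y)
    (hsymm : ∀ x y, ω x y = ω y x) (hμ : ∀ x, 0 < μ x) (hf : ∀ x, Continuous (f x))
    (hsub : -graphLap ω μ φ x ≤ f x (φ x)) (hu : u ∈ Set.Icc φ ψ)
    (hmin : IsMinOn (Jfun ω μ f) (Set.Icc φ ψ) u) :
    -graphLap ω μ u x ≤ f x (u x) := by
  classical
  rcases (hu.1 x).eq_or_lt with hx | hx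
  · calc -graphLap ω μ u x ≤ -graphLap ω μ φ x :=
        neg_le_neg (graphLap_le_graphLap_of_le_of_eq (hω x) (hμ x).le hu.1 hx)
      _ ≤ f x (φ x) := hsub
      _ = f x (u x) := by rw [hx]
  · have hleft : ∀ᶠ t in 𝓝[>] (0 : ℝ), u + t • Pi.single x (-1) ∈ Set.Icc φ ψ := by
      filter_upwards [Ioo_mem_nhdsGT (sub_pos.2 hx)] with t ht
      exact add_smul_single_mem_Icc hu ⟨by linarith [ht.2], by linarith [hu.2 x, ht.1]⟩
    have hd := hmin.hasLineDerivAt_nonneg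
      (hasLineDerivAt_Jfun_single hsymm (fun y => (hμ y).ne') hf u x (-1)) hleft
    rw [mul_neg_one, neg_nonneg] at hd
    linarith [nonpos_of_mul_nonpos_right hd (hμ x)]

end WeightedGraph

theorem stmt_15_general {V : Type*} [Fintype V]
    (ω : V → V → ℝ) (μ : V → ℝ)
    (hsymm : ∀ x y, ω x y = ω y x)
    (hnonneg : ∀ x y, 0 ≤ ω x y)
    (hμ : ∀ x, 0 < μ x)
    (f : V → ℝ → ℝ) (hf : ∀ x, Continuous (f x))
    (φ ψ : V → ℝ)
    (hsub : ∀ x, -graphLap ω μ φ x ≤ f x (φ x))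
    (hsup : ∀ x, f x (ψ x) ≤ -graphLap ω μ ψ x)
    (u : V → ℝ)
    (hu : ∀ x, φ x ≤ u x ∧ u x ≤ ψ x)
    (hmin : ∀ v : V → ℝ, (∀ x, φ x ≤ v x ∧ v x ≤ ψ x) →
      Jfun ω μ f u ≤ Jfun ω μ f v) :
    ∀ x, -graphLap ω μ u x = f x (u x) := by
  have hmem : u ∈ Set.Icc φ ψ := ⟨fun x => (hu x).1, fun x => (hu x).2⟩
  have hmin' : IsMinOn (Jfun ω μ f) (Set.Icc φ ψ) u :=
    isMinOn_iff.2 fun v hv => hmin v fun x => ⟨hv.1 x, hv.2 x⟩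
  intro x
  exact le_antisymm (neg_graphLap_le_of_isMinOn hnonneg hsymm hμ hf (hsub x) hmem hmin')
    (le_neg_graphLap_of_isMinOn hnonneg hsymm hμ hf (hsup x) hmem hmin')

/-- Sub-super solution principle on graphs. -/
theorem stmt_15 {V : Type*} [Fintype V] [Nonempty V]
    (ω : V → V → ℝ) (μ : V → ℝ)
    (hsymm : ∀ x y, ω x y = ω y x)
    (hnonneg : ∀ x y, 0 ≤ ω x y)
    (hconn : graphConnected ω)
    (hμ : ∀ x, 0 < μ x)
    (f : V → ℝ → ℝ) (hf : ∀ x, Continuous (f x))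
    (φ ψ : V → ℝ)
    (hφψ : ∀ x, φ x ≤ ψ x)
    (hsub : ∀ x, -graphLap ω μ φ x ≤ f x (φ x))
    (hsup : ∀ x, f x (ψ x) ≤ -graphLap ω μ ψ x)
    (u : V → ℝ)
    (hu : ∀ x, φ x ≤ u x ∧ u x ≤ ψ x)
    (hmin : ∀ v : V → ℝ, (∀ x, φ x ≤ v x ∧ v x ≤ ψ x) →
      Jfun ω μ f u ≤ Jfun ω μ f v) :
    ∀ x, -graphLap ω μ u x = f x (u x) :=
  stmt_15_general ω μ hsymm hnonneg hμ f hf φ ψ hsub hsup u hu hmin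
end

section
/- There exists ε₀ > 0, depending only on the graph G, such that for every ε with 0 < ε < ε₀ the equation −Δu(x) = e^{u(x)} − ε for all x ∈ V has exactly one solution u : V → ℝ, namely the constant function u ≡ ln ε. -/
open Finset Real Filter

/-! ### Auxiliary lemmas -/

/-- Twice the Dirichlet energy of `u`. -/
noncomputable def DirE {V : Type*} [Fintype V] (ω : V → V → ℝ) (u : V → ℝ) : ℝ :=
  ∑ x, ∑ y, ω x y * (u y - u x)^2

lemma dirE_nonneg {V : Type*} [Fintype V] (ω : V → V → ℝ) (hnonneg : ∀ x y, 0 ≤ ω x y)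
    (u : V → ℝ) : 0 ≤ DirE ω u := by
  apply Finset.sum_nonneg; intro x _
  apply Finset.sum_nonneg; intro y _
  exact mul_nonneg (hnonneg x y) (sq_nonneg _)

lemma term_le_dirE {V : Type*} [Fintype V] (ω : V → V → ℝ) (hnonneg : ∀ x y, 0 ≤ ω x y)
    (u : V → ℝ) (a b : V) : ω a b * (u b - u a)^2 ≤ DirE ω u := by
  have h1 : ω a b * (u b - u a)^2 ≤ ∑ y, ω a y * (u y - u a)^2 :=
    Finset.single_le_sum (f := fun y => ω a y * (u y - u a)^2)
      (fun y _ => mul_nonneg (hnonneg a y) (sq_nonneg _)) (Finset.mem_univ b)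
  refine h1.trans ?_
  exact Finset.single_le_sum (f := fun x => ∑ y, ω x y * (u y - u x)^2)
    (fun x _ => Finset.sum_nonneg fun y _ => mul_nonneg (hnonneg x y) (sq_nonneg _))
    (Finset.mem_univ a)

lemma swap_sum {V : Type*} [Fintype V] (ω : V → V → ℝ) (hsymm : ∀ x y, ω x y = ω y x)
    (u f : V → ℝ) :
    ∑ x, ∑ y, ω x y * (u y - u x) * f x = - ∑ x, ∑ y, ω x y * (u y - u x) * f y := by
  rw [Finset.sum_comm]
  rw [show (∑ y, ∑ x, ω x y * (u y - u x) * f x)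
      = ∑ a, ∑ b, -(ω a b * (u b - u a) * f b) from
    Finset.sum_congr rfl fun a _ => Finset.sum_congr rfl fun b _ => by rw [hsymm b a]; ring]
  simp

lemma path_bound {V : Type*} [Fintype V] (ω : V → V → ℝ) (hnonneg : ∀ x y, 0 ≤ ω x y)
    (u : V → ℝ) (n : ℕ) (p : ℕ → V) (hp : ∀ i < n, 0 < ω (p i) (p (i+1))) :
    |u (p 0) - u (p n)| ≤
      (∑ i ∈ Finset.range n, Real.sqrt (1 / ω (p i) (p (i+1)))) * Real.sqrt (DirE ω u) := by
  induction n with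
  | zero => simp
  | succ n ih =>
    have hstep : ∀ i < n, 0 < ω (p i) (p (i+1)) := fun i hi => hp i (hi.trans (Nat.lt_succ_self n))
    have h1 := ih hstep
    have hw : 0 < ω (p n) (p (n+1)) := hp n (Nat.lt_succ_self n)
    set d := u (p (n+1)) - u (p n) with hd
    have h2 : ω (p n) (p (n+1)) * d^2 ≤ DirE ω u := term_le_dirE ω hnonneg u (p n) (p (n+1))
    have h3 : |d| ≤ Real.sqrt (1 / ω (p n) (p (n+1))) * Real.sqrt (DirE ω u) := by
      rw [← Real.sqrt_sq_eq_abs, ← Real.sqrt_mul (by positivity)]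
      apply Real.sqrt_le_sqrt
      rw [div_mul_eq_mul_div, one_mul, le_div_iff₀ hw]
      linarith [h2]
    calc |u (p 0) - u (p (n+1))| ≤ |u (p 0) - u (p n)| + |d| := by
          rw [hd, abs_sub_comm (u (p (n+1)))]
          exact abs_sub_le _ _ _
      _ ≤ _ := by
          rw [Finset.sum_range_succ, add_mul]
          exact add_le_add h1 h3

lemma eps_small (ε K M C : ℝ) (hε : 0 < ε) (hK0 : 0 < K) (hM0 : 0 < M) (hC0 : 0 ≤ C)
    (hε1 : ε * (2*K*M*(C+1)^2 + 1) < 1) : ε * K * M * C^2 < 1/2 := by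
  nlinarith [mul_le_mul_of_nonneg_left (show C^2 ≤ (C+1)^2 by nlinarith)
      (show (0:ℝ) ≤ ε * K * M from le_of_lt (mul_pos (mul_pos hε hK0) hM0)),
    mul_nonneg (mul_nonneg (mul_nonneg hε.le hK0.le) hM0.le) hC0]

lemma exp_quad_bound (t B : ℝ) (hB : Real.exp t ≤ B) (hB1 : 1 ≤ B) :
    (Real.exp t - 1) * t ≤ B * t^2 := by
  rcases le_or_gt 0 t with ht | ht
  · have h1 : (-t) + 1 ≤ Real.exp (-t) := Real.add_one_le_exp _
    have h2 : Real.exp (-t) * Real.exp t = 1 := by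
      rw [← Real.exp_add]; simp
    have h3 : (0:ℝ) < Real.exp t := Real.exp_pos t
    have e1 : Real.exp t - 1 ≤ t * Real.exp t := by
      nlinarith [mul_le_mul_of_nonneg_right h1 h3.le]
    nlinarith [mul_le_mul_of_nonneg_right e1 ht,
      mul_le_mul_of_nonneg_left hB (mul_nonneg ht ht)]
  · have h1 : t + 1 ≤ Real.exp t := Real.add_one_le_exp t
    nlinarith [mul_le_mul_of_nonpos_right (show t ≤ Real.exp t - 1 by linarith) ht.le,
      mul_le_mul_of_nonneg_right hB1 (mul_self_nonneg t)]

/-- For small `ε > 0` the equation `−Δu = e^u − ε` has exactly the constant solution `ln ε`. -/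
theorem stmt_19 {V : Type*} [Fintype V] [Nonempty V]
    (ω : V → V → ℝ) (μ : V → ℝ)
    (hsymm : ∀ x y, ω x y = ω y x)
    (hnonneg : ∀ x y, 0 ≤ ω x y)
    (hconn : graphConnected ω)
    (hμ : ∀ x, 0 < μ x) :
    ∃ ε₀ > (0 : ℝ), ∀ ε : ℝ, 0 < ε → ε < ε₀ →
      ∀ u : V → ℝ,
        (∀ x, -graphLap ω μ u x = Real.exp (u x) - ε) ↔ u = fun _ => Real.log ε := by
  classical
  -- the oscillation constant
  obtain ⟨cc, hcc0, hccb⟩ :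
      ∃ cc : V → V → ℝ, (∀ x y, 0 ≤ cc x y) ∧
        ∀ x y, ∀ u : V → ℝ, |u x - u y| ≤ cc x y * Real.sqrt (DirE ω u) := by
    have h : ∀ x y : V, ∃ c : ℝ, 0 ≤ c ∧
        ∀ u : V → ℝ, |u x - u y| ≤ c * Real.sqrt (DirE ω u) := by
      intro x y
      obtain ⟨n, p, hp0, hpn, hpw⟩ := hconn x y
      refine ⟨∑ i ∈ Finset.range n, Real.sqrt (1 / ω (p i) (p (i+1))),
        Finset.sum_nonneg fun i _ => Real.sqrt_nonneg _, fun u => ?_⟩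
      have := path_bound ω hnonneg u n p hpw
      rwa [hp0, hpn] at this
    choose cc h1 h2 using h
    exact ⟨cc, h1, h2⟩
  set C : ℝ := ∑ x : V, ∑ y : V, cc x y with hCdef
  have hC0 : 0 ≤ C := Finset.sum_nonneg fun x _ => Finset.sum_nonneg fun y _ => hcc0 x y
  have hccC : ∀ a b : V, cc a b ≤ C := by
    intro a b
    have h1 : cc a b ≤ ∑ y, cc a y :=
      Finset.single_le_sum (f := fun y => cc a y) (fun y _ => hcc0 a y) (Finset.mem_univ b)
    exact h1.trans (Finset.single_le_sum (f := fun x => ∑ y, cc x y)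
      (fun x _ => Finset.sum_nonneg fun y _ => hcc0 x y) (Finset.mem_univ a))
  set M : ℝ := ∑ x : V, μ x with hMdef
  have hM0 : 0 < M := Finset.sum_pos (fun x _ => hμ x) Finset.univ_nonempty
  set K : ℝ := 1 + ∑ x : V, M / μ x with hKdef
  have hK1 : 1 ≤ K := by
    have : 0 ≤ ∑ x : V, M / μ x :=
      Finset.sum_nonneg fun x _ => le_of_lt (div_pos hM0 (hμ x))
    rw [hKdef]; linarith
  have hKx : ∀ x, M / μ x ≤ K := by
    intro x
    have h1 : M / μ x ≤ ∑ y : V, M / μ y :=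
      Finset.single_le_sum (f := fun y => M / μ y)
        (fun y _ => le_of_lt (div_pos hM0 (hμ y))) (Finset.mem_univ x)
    rw [hKdef]; linarith
  have hK0 : 0 < K := lt_of_lt_of_le one_pos hK1
  have hC1 : (0:ℝ) < (C+1)^2 := by nlinarith
  have hd : (0:ℝ) < 2*K*M*(C+1)^2 + 1 := by
    have := mul_pos (mul_pos (mul_pos (show (0:ℝ) < 2 by norm_num) hK0) hM0) hC1
    linarith
  refine ⟨1 / (2*K*M*(C+1)^2 + 1), one_div_pos.mpr hd, ?_⟩
  intro ε hε hεlt u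
  constructor
  · intro heq
    have hglap : ∀ x, μ x * graphLap ω μ u x = ∑ y, ω x y * (u y - u x) := by
      intro x
      simp only [graphLap]
      rw [← mul_assoc, mul_one_div, div_self (hμ x).ne', one_mul]
    have hgeq : ∀ x, μ x * (Real.exp (u x) - ε) = -(∑ y, ω x y * (u y - u x)) := by
      intro x
      rw [← hglap x, ← heq x]
      ring
    have hg0 : ∑ x, ∑ y, ω x y * (u y - u x) = 0 := by
      have h := swap_sum ω hsymm u (fun _ => 1)
      simp only [mul_one] at h
      linarith
    have hA := swap_sum ω hsymm u u
    have hBA : (∑ x, ∑ y, ω x y * (u y - u x) * u y) - (∑ x, ∑ y, ω x y * (u y - u x) * u x)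
        = DirE ω u := by
      simp only [DirE, ← Finset.sum_sub_distrib]
      apply Finset.sum_congr rfl; intro x _
      apply Finset.sum_congr rfl; intro y _
      ring
    have hgreen : ∑ x, (∑ y, ω x y * (u y - u x)) * u x = -(DirE ω u) / 2 := by
      simp only [Finset.sum_mul]
      linarith
    have hkey : ∑ x, μ x * (Real.exp (u x) - ε) * (u x - Real.log ε) = DirE ω u / 2 := by
      calc ∑ x, μ x * (Real.exp (u x) - ε) * (u x - Real.log ε)
          = ∑ x, (-((∑ y, ω x y * (u y - u x)) * u x)
              + Real.log ε * (∑ y, ω x y * (u y - u x))) := by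
            apply Finset.sum_congr rfl; intro x _
            linear_combination (u x - Real.log ε) * hgeq x
        _ = -(∑ x, (∑ y, ω x y * (u y - u x)) * u x)
              + Real.log ε * ∑ x, (∑ y, ω x y * (u y - u x)) := by
            rw [Finset.sum_add_distrib, Finset.sum_neg_distrib, ← Finset.mul_sum]
        _ = DirE ω u / 2 := by
            rw [hgreen, hg0, mul_zero]; ring
    have hsumexp : ∑ x, μ x * Real.exp (u x) = ε * M := by
      have h1 : ∑ x, μ x * (Real.exp (u x) - ε) = 0 := by
        rw [Finset.sum_congr rfl fun x _ => hgeq x, Finset.sum_neg_distrib, hg0, neg_zero]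
      have h2 : ∑ x, (μ x * Real.exp (u x) - μ x * ε) = 0 := by
        simpa [mul_sub] using h1
      rw [Finset.sum_sub_distrib, ← Finset.sum_mul, ← hMdef] at h2
      linarith
    have hexpw : ∀ x, Real.exp (u x - Real.log ε) ≤ K := by
      intro x
      have h1 : μ x * Real.exp (u x) ≤ ε * M :=
        hsumexp ▸ Finset.single_le_sum (f := fun x => μ x * Real.exp (u x))
          (fun y _ => mul_nonneg (hμ y).le (Real.exp_pos _).le) (Finset.mem_univ x)
      rw [Real.exp_sub, Real.exp_log hε]
      have h3 : Real.exp (u x) / ε ≤ M / μ x := by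
        rw [div_le_div_iff₀ hε (hμ x)]
        calc Real.exp (u x) * μ x = μ x * Real.exp (u x) := mul_comm _ _
          _ ≤ ε * M := h1
          _ = M * ε := mul_comm _ _
      exact h3.trans (hKx x)
    have hterm : ∀ x, μ x * (Real.exp (u x) - ε) * (u x - Real.log ε)
        ≤ ε * K * (μ x * (u x - Real.log ε)^2) := by
      intro x
      have h1 : Real.exp (u x) - ε = ε * (Real.exp (u x - Real.log ε) - 1) := by
        rw [Real.exp_sub, Real.exp_log hε]
        field_simp
      rw [h1]
      have h2 := exp_quad_bound (u x - Real.log ε) K (hexpw x) hK1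
      calc μ x * (ε * (Real.exp (u x - Real.log ε) - 1)) * (u x - Real.log ε)
          = (ε * μ x) * ((Real.exp (u x - Real.log ε) - 1) * (u x - Real.log ε)) := by ring
        _ ≤ (ε * μ x) * (K * (u x - Real.log ε)^2) :=
            mul_le_mul_of_nonneg_left h2 (mul_nonneg hε.le (hμ x).le)
        _ = ε * K * (μ x * (u x - Real.log ε)^2) := by ring
    -- log ε is between min and max of u
    have hex1 : ∃ x, ε ≤ Real.exp (u x) := by
      by_contra h
      push_neg at h
      have h2 : ∑ x, μ x * Real.exp (u x) < ∑ x, μ x * ε :=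
        Finset.sum_lt_sum_of_nonempty Finset.univ_nonempty
          (fun x _ => mul_lt_mul_of_pos_left (h x) (hμ x))
      rw [hsumexp, ← Finset.sum_mul, ← hMdef, mul_comm] at h2
      exact lt_irrefl _ h2
    have hex2 : ∃ x, Real.exp (u x) ≤ ε := by
      by_contra h
      push_neg at h
      have h2 : ∑ x, μ x * ε < ∑ x, μ x * Real.exp (u x) :=
        Finset.sum_lt_sum_of_nonempty Finset.univ_nonempty
          (fun x _ => mul_lt_mul_of_pos_left (h x) (hμ x))
      rw [hsumexp, ← Finset.sum_mul, ← hMdef, mul_comm] at h2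
      exact lt_irrefl _ h2
    have hle : ∀ x, u x ≤ maxV u := fun x => Finset.le_sup' u (Finset.mem_univ x)
    have hge : ∀ x, minV u ≤ u x := fun x => Finset.inf'_le u (Finset.mem_univ x)
    have hmaxV : Real.log ε ≤ maxV u := by
      obtain ⟨x, hx⟩ := hex1
      exact ((Real.log_le_iff_le_exp hε).mpr hx).trans (hle x)
    have hminV : minV u ≤ Real.log ε := by
      obtain ⟨x, hx⟩ := hex2
      exact (hge x).trans ((Real.le_log_iff_exp_le hε).mpr hx)
    have hDir0 : 0 ≤ DirE ω u := dirE_nonneg ω hnonneg u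
    have hoscb : maxV u - minV u ≤ C * Real.sqrt (DirE ω u) := by
      obtain ⟨a, _, hav⟩ := Finset.exists_mem_eq_sup' (Finset.univ_nonempty (α := V)) u
      obtain ⟨b, _, hbv⟩ := Finset.exists_mem_eq_inf' (Finset.univ_nonempty (α := V)) u
      have h1 : maxV u - minV u = u a - u b := by rw [maxV, minV, hav, hbv]
      rw [h1]
      calc u a - u b ≤ |u a - u b| := le_abs_self _
        _ ≤ cc a b * Real.sqrt (DirE ω u) := hccb a b u
        _ ≤ C * Real.sqrt (DirE ω u) :=
            mul_le_mul_of_nonneg_right (hccC a b) (Real.sqrt_nonneg _)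
    have hosc0 : 0 ≤ maxV u - minV u := by
      have x := Classical.arbitrary V
      linarith [hle x, hge x]
    have hw2 : ∀ x, (u x - Real.log ε)^2 ≤ (maxV u - minV u)^2 := by
      intro x
      apply sq_le_sq'
      · linarith [hge x]
      · linarith [hle x]
    have hchain : DirE ω u / 2 ≤ ε * K * (M * (maxV u - minV u)^2) := by
      rw [← hkey]
      calc ∑ x, μ x * (Real.exp (u x) - ε) * (u x - Real.log ε)
          ≤ ∑ x, ε * K * (μ x * (u x - Real.log ε)^2) :=
            Finset.sum_le_sum fun x _ => hterm x
        _ ≤ ∑ x, ε * K * (μ x * (maxV u - minV u)^2) := by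
            apply Finset.sum_le_sum
            intro x _
            have h1 := hw2 x
            have h2 : μ x * (u x - Real.log ε)^2 ≤ μ x * (maxV u - minV u)^2 :=
              mul_le_mul_of_nonneg_left h1 (hμ x).le
            exact mul_le_mul_of_nonneg_left h2 (mul_nonneg hε.le hK0.le)
        _ = ε * K * (M * (maxV u - minV u)^2) := by
            rw [← Finset.mul_sum, ← Finset.sum_mul, ← hMdef]
    have hosc2 : (maxV u - minV u)^2 ≤ C^2 * DirE ω u := by
      have h1 : (maxV u - minV u)^2 ≤ (C * Real.sqrt (DirE ω u))^2 := by
        apply sq_le_sq' _ hoscb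
        have : 0 ≤ C * Real.sqrt (DirE ω u) := by positivity
        linarith
      calc (maxV u - minV u)^2 ≤ (C * Real.sqrt (DirE ω u))^2 := h1
        _ = C^2 * (Real.sqrt (DirE ω u))^2 := by ring
        _ = C^2 * DirE ω u := by rw [Real.sq_sqrt hDir0]
    have hfin : DirE ω u / 2 ≤ ε * K * M * C^2 * DirE ω u := by
      refine hchain.trans ?_
      calc ε * K * (M * (maxV u - minV u)^2)
          ≤ ε * K * (M * (C^2 * DirE ω u)) := by
            apply mul_le_mul_of_nonneg_left _ (mul_nonneg hε.le hK0.le)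
            exact mul_le_mul_of_nonneg_left hosc2 hM0.le
        _ = ε * K * M * C^2 * DirE ω u := by ring
    have hε1 : ε * (2*K*M*(C+1)^2 + 1) < 1 := (lt_div_iff₀ hd).mp hεlt
    have hq : ε * K * M * C^2 < 1/2 := eps_small ε K M C hε hK0 hM0 hC0 hε1
    have hDirZ : DirE ω u = 0 := by
      rcases eq_or_lt_of_le hDir0 with h | h
      · exact h.symm
      · exfalso
        have h3 : ε * K * M * C^2 * DirE ω u < (1/2) * DirE ω u :=
          mul_lt_mul_of_pos_right hq h
        linarith
    have hosc : maxV u - minV u = 0 := by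
      have h1 := hoscb
      rw [hDirZ, Real.sqrt_zero, mul_zero] at h1
      linarith
    funext x
    show u x = Real.log ε
    have h1 := hle x
    have h2 := hge x
    linarith
  · rintro rfl x
    simp [graphLap, Real.exp_log hε]
end
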